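/- arXiv:2208.03539 — 8 statements merged into one kernel-verified Lean document; each statement's English description precedes it below -/
import Mathlib

section
/- Fix a positive integer m, a commutative ring R, and a sequence α = (α_i)_{i≥m} in R. Define λ_{0,j} = 1 for all j ∈ ℕ, λ_{i,j} = Σ_{j ≥ ℓ_1 ≥ ℓ_2 ≥ ⋯ ≥ ℓ_i ≥ i} ∏_{k=1}^{i} α_{k·m+ℓ_k} for 1 ≤ i ≤ j, and λ_{i,j} = 0 for i > j. Then for all n, j ∈ ℕ the modified m-Stieltjes–Rogers polynomial equals the finite sum Ŝ^{(m)}_{n,j}(α) = Σ_{i=0}^{j} S^{(m)}_{n,i}(α) · λ_{i,j}, i.e. the matrix of modified m-Stieltjes–Rogers polynomials factors as Ŝ^{(m)} = S^{(m)} · Λ^{(m)} with Λ^{(m)} = (λ_{i,j}) upper triangular. -/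
open Finset

/-- `dyckD m α x y` is the generating polynomial of partial `m`-Dyck paths from `(0,0)` to
`(x,y)`: paths using steps `(1,1)` of weight `1` and `(1,-m)` of weight `α i` when the fall
starts at height `i`. -/
def dyckD {R : Type*} [CommRing R] (m : ℕ) (α : ℕ → R) : ℕ → ℕ → R
  | 0, 0 => 1
  | 0, _ + 1 => 0
  | x + 1, 0 => α m * dyckD m α x m
  | x + 1, y + 1 => dyckD m α x y + α (y + 1 + m) * dyckD m α x (y + 1 + m)

/-- The entries `λ_{i,j}` of the upper-triangular matrix `Λ^{(m)}`:
`λ_{0,j} = 1` and, for `i ≥ 1`,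
`λ_{i,j} = Σ_{j ≥ ℓ_1 ≥ ⋯ ≥ ℓ_i ≥ i} ∏_{k=1}^{i} α_{k·m+ℓ_k}` (an empty sum, hence `0`,
when `i > j`). -/
def lamEntry {R : Type*} [CommRing R] (m : ℕ) (α : ℕ → R) (i j : ℕ) : R :=
  if i = 0 then 1
  else
    ∑ ℓ ∈ Finset.univ.filter
        (fun ℓ : Fin i → Fin (j + 1) =>
          (∀ k l : Fin i, k ≤ l → (ℓ l : ℕ) ≤ (ℓ k : ℕ)) ∧ ∀ k : Fin i, i ≤ (ℓ k : ℕ)),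
      ∏ k : Fin i, α (((k : ℕ) + 1) * m + (ℓ k : ℕ))

/-!
Cut a path of length `(m+1)n + j` ending at height `j` after its first `(m+1)n` steps. The height
reached there is `≡ 0 mod m+1`, say `(m+1)i`, and the first part is counted by `S_{n,i}`. The
remaining `j` steps lead from `(m+1)i` to `j`; as a function of the final height, their generating
polynomial satisfies the recursion obtained for `λ` by splitting off the largest index `ℓ_1`, so it
equals `λ_{i,j}`.
-/

theorem Fin.antitone_cons {β : Type*} [Preorder β] {n : ℕ} {a : β} {g : Fin n → β}
    (hg : Antitone g) (ha : ∀ i, g i ≤ a) : Antitone (Fin.cons a g : Fin (n + 1) → β) := by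
  intro k l hkl
  induction l using Fin.cases with
  | zero => rw [Fin.le_zero_iff.mp hkl]
  | succ l =>
    induction k using Fin.cases with
    | zero => simpa using ha l
    | succ k => simpa using hg (Fin.succ_le_succ_iff.mp hkl)

section

variable {R : Type*} [CommRing R] (m : ℕ) (α : ℕ → R)

open Classical in
noncomputable def lamGen (f b c : ℕ) : R :=
  ∑ ℓ ∈ (Fintype.piFinset fun _ : Fin f => Icc b c).filter Antitone,
    ∏ k : Fin f, α (((k : ℕ) + 1) * m + ℓ k)

theorem lamGen_zero (b c : ℕ) : lamGen m α 0 b c = 1 := by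
  simp [lamGen, Subsingleton.antitone]

theorem lamGen_eq_zero_of_lt {b c : ℕ} (f : ℕ) (h : c < b) : lamGen m α (f + 1) b c = 0 := by
  simp [lamGen, Icc_eq_empty_of_lt h]

theorem lamEntry_eq_lamGen (i j : ℕ) : lamEntry m α i j = lamGen m α i i j := by
  rcases i with _ | i
  · simp [lamEntry, lamGen_zero]
  rw [lamEntry, if_neg (Nat.succ_ne_zero i), lamGen]
  refine sum_nbij' (fun ℓ k => (ℓ k : ℕ)) (fun ℓ k => Fin.ofNat (j + 1) (ℓ k)) ?_ ?_ ?_ ?_ ?_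
  · simp only [mem_filter, mem_univ, true_and, Fintype.mem_piFinset, mem_Icc]
    exact fun ℓ ⟨hA, hb⟩ =>
      ⟨fun k => ⟨hb k, Nat.lt_succ_iff.mp (ℓ k).isLt⟩, fun k l hkl => hA k l hkl⟩
  · simp only [mem_filter, mem_univ, true_and, Fintype.mem_piFinset, mem_Icc, Fin.val_ofNat]
    intro ℓ ⟨hI, hA⟩
    have hval : ∀ k, ℓ k % (j + 1) = ℓ k :=
      fun k => Nat.mod_eq_of_lt (Nat.lt_succ_of_le (hI k).2)
    simp only [hval]
    exact ⟨fun k l hkl => hA hkl, fun k => (hI k).1⟩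
  · intro ℓ _
    simp
  · simp only [mem_filter, Fintype.mem_piFinset, mem_Icc]
    intro ℓ ⟨hI, _⟩
    funext k
    exact Nat.mod_eq_of_lt (Nat.lt_succ_of_le (hI k).2)
  · intro ℓ _
    rfl

theorem lamGen_succ_right_of_le {b c : ℕ} (f : ℕ) (hb : b ≤ c + 1) :
    lamGen m α (f + 1) b (c + 1)
      = lamGen m α (f + 1) b c + α (m + (c + 1)) * lamGen m α f (b + m) (c + 1 + m) := by
  rw [lamGen, ← sum_filter_add_sum_filter_not _ (fun ℓ => ℓ 0 ≤ c)]
  congr 1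
  · refine sum_congr ?_ fun _ _ => rfl
    ext ℓ
    simp only [mem_filter, Fintype.mem_piFinset, mem_Icc]
    constructor
    · rintro ⟨⟨hI, hA⟩, h0⟩
      exact ⟨fun k => ⟨(hI k).1, (hA (Fin.zero_le k)).trans h0⟩, hA⟩
    · rintro ⟨hI, hA⟩
      exact ⟨⟨fun k => ⟨(hI k).1, (hI k).2.trans c.le_succ⟩, hA⟩, (hI 0).2⟩
  · -- the tuples with `ℓ 0 = c + 1` correspond to their shifted tails `k ↦ ℓ k.succ + m`
    rw [lamGen, mul_sum]
    refine sum_nbij' (fun ℓ k => ℓ k.succ + m) (fun ℓ => Fin.cons (c + 1) fun k => ℓ k - m)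
      ?_ ?_ ?_ ?_ ?_
    · simp only [mem_filter, Fintype.mem_piFinset, mem_Icc]
      rintro ℓ ⟨⟨hI, hA⟩, h0⟩
      refine ⟨fun k => ?_, fun k l hkl => ?_⟩
      · have := hI k.succ; have := hA (Fin.zero_le k.succ); omega
      · have := hA (Fin.succ_le_succ_iff.mpr hkl); simp only; omega
    · simp only [mem_filter, Fintype.mem_piFinset, mem_Icc]
      rintro ℓ ⟨hI, hA⟩
      refine ⟨⟨fun k => ?_, Fin.antitone_cons (fun k l hkl => ?_) fun k => ?_⟩, by simp⟩
      · induction k using Fin.cases with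
        | zero => simpa using hb
        | succ k => have := hI k; simp only [Fin.cons_succ]; omega
      · have := hA hkl; omega
      · have := hI k; omega
    · simp only [mem_filter, Fintype.mem_piFinset, mem_Icc]
      rintro ℓ ⟨⟨hI, -⟩, h0⟩
      funext k
      induction k using Fin.cases with
      | zero => have := hI 0; simp only [Fin.cons_zero]; omega
      | succ k => simp
    · simp only [mem_filter, Fintype.mem_piFinset, mem_Icc]
      rintro ℓ ⟨hI, -⟩
      funext k
      have := hI k
      simp only [Fin.cons_succ]
      omega
    · simp only [mem_filter, Fintype.mem_piFinset, mem_Icc]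
      rintro ℓ ⟨⟨hI, -⟩, h0⟩
      have h0' : ℓ 0 = c + 1 := by have := hI 0; omega
      rw [Fin.prod_univ_succ]
      simp only [Fin.val_zero, Fin.val_succ, h0']
      congr 1
      · ring_nf
      · refine prod_congr rfl fun k _ => ?_
        ring_nf

theorem lamGen_succ_right {b c : ℕ} (f : ℕ) (h : b ≤ c + 1 ∨ f ≠ 0) :
    lamGen m α (f + 1) b (c + 1)
      = lamGen m α (f + 1) b c + α (m + (c + 1)) * lamGen m α f (b + m) (c + 1 + m) := by
  by_cases hb : b ≤ c + 1
  · exact lamGen_succ_right_of_le m α f hb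
  obtain ⟨f, rfl⟩ := Nat.exists_eq_succ_of_ne_zero (h.resolve_left hb)
  rw [lamGen_eq_zero_of_lt m α _ (by omega), lamGen_eq_zero_of_lt m α _ (by omega),
    lamGen_eq_zero_of_lt m α _ (by omega)]
  ring

/-- The weight of the paths of length `x` from height `y` to height `h`. -/
def dyckFrom (y : ℕ) : ℕ → ℕ → R
  | 0, h => if y = h then 1 else 0
  | x + 1, 0 => α m * dyckFrom y x m
  | x + 1, h + 1 => dyckFrom y x h + α (h + 1 + m) * dyckFrom y x (h + 1 + m)

theorem dyckFrom_eq_zero_of_lt {y h : ℕ} (x : ℕ) (hlt : y + x < h) :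
    dyckFrom m α y x h = 0 := by
  induction x generalizing h with
  | zero => rw [dyckFrom, if_neg (by omega)]
  | succ x ih =>
    obtain ⟨h, rfl⟩ := Nat.exists_eq_succ_of_ne_zero (Nat.ne_zero_of_lt hlt)
    rw [dyckFrom, ih (by omega), ih (by omega), mul_zero, add_zero]

theorem dyckD_eq_zero_of_lt {x y : ℕ} (hlt : x < y) : dyckD m α x y = 0 := by
  induction x generalizing y with
  | zero => obtain ⟨y, rfl⟩ := Nat.exists_eq_succ_of_ne_zero hlt.ne'; rfl
  | succ x ih =>
    obtain ⟨y, rfl⟩ := Nat.exists_eq_succ_of_ne_zero (Nat.ne_zero_of_lt hlt)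
    rw [dyckD, ih (by omega), ih (by omega), mul_zero, add_zero]

theorem dyckD_eq_zero_of_not_modEq {x y : ℕ} (h : ¬ x ≡ y [MOD m + 1]) :
    dyckD m α x y = 0 := by
  induction x generalizing y with
  | zero => cases y with
    | zero => exact absurd rfl h
    | succ y => rfl
  | succ x ih => cases y with
    | zero =>
      rw [dyckD, ih fun hx => h ((hx.add_right 1).trans (Nat.modEq_zero_iff_dvd.2 dvd_rfl)),
        mul_zero]
    | succ y =>
      have hfall : ¬ x ≡ y + 1 + m [MOD m + 1] := fun hx =>
        h ((hx.add_right 1).trans (add_assoc (y + 1) m 1 ▸ Nat.add_modEq_right))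
      rw [dyckD, ih fun hx => h (hx.add_right 1), ih hfall, mul_zero, add_zero]

theorem dyckD_add (a b h : ℕ) :
    dyckD m α (a + b) h = ∑ y ∈ range (a + 1), dyckD m α a y * dyckFrom m α y b h := by
  induction b generalizing h with
  | zero =>
    simp only [add_zero, dyckFrom, mul_ite, mul_one, mul_zero, sum_ite_eq', mem_range]
    split_ifs with hh
    · rfl
    · exact dyckD_eq_zero_of_lt m α (by simpa using hh)
  | succ b ih =>
    rw [← add_assoc]
    cases h with
    | zero =>
      simp only [dyckD, dyckFrom, ih, mul_sum]
      exact sum_congr rfl fun y _ => by ring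
    | succ h =>
      simp only [dyckD, dyckFrom, ih, mul_sum, ← sum_add_distrib]
      exact sum_congr rfl fun y _ => by ring

-- Such a path has exactly `f` falls; its last step is a rise, or a fall from
-- `s + (m + 1) * (t + 1)`, matching `lamGen_succ_right`.
theorem dyckFrom_eq_lamGen (s t f : ℕ) :
    dyckFrom m α ((m + 1) * (t + f)) s (s + (m + 1) * t)
      = lamGen m α f (t + f + t * m) (s + (m + 1) * t) := by
  induction s generalizing t f with
  | zero =>
    rcases f with _ | f
    · simp [dyckFrom, lamGen_zero]
    · rw [dyckFrom, if_neg (by nlinarith), lamGen_eq_zero_of_lt m α f (by nlinarith)]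
  | succ s ih =>
    rw [show s + 1 + (m + 1) * t = s + (m + 1) * t + 1 by ring, dyckFrom,
      show s + (m + 1) * t + 1 + m = s + (m + 1) * (t + 1) by ring, ih t f]
    rcases f with _ | f
    · rw [dyckFrom_eq_zero_of_lt m α s (by nlinarith), lamGen_zero, lamGen_zero, mul_zero,
        add_zero]
    · have hfall := ih (t + 1) f
      rw [show t + 1 + f = t + (f + 1) by ring] at hfall
      rw [hfall, lamGen_succ_right m α f (by ring_nf; omega)]
      congr 3 <;> ring

theorem lamEntry_eq_dyckFrom (i j : ℕ) :
    lamEntry m α i j = dyckFrom m α ((m + 1) * i) j j := by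
  simpa [lamEntry_eq_lamGen] using (dyckFrom_eq_lamGen m α j 0 i).symm

theorem lamEntry_eq_zero_of_lt {i j : ℕ} (h : j < i) : lamEntry m α i j = 0 := by
  obtain ⟨i, rfl⟩ := Nat.exists_eq_succ_of_ne_zero (Nat.ne_zero_of_lt h)
  rw [lamEntry_eq_lamGen, lamGen_eq_zero_of_lt m α i h]

end

theorem Finset.sum_range_mul_add_one_eq {M : Type*} [AddCommMonoid M] {d : ℕ} (hd : 0 < d)
    {g : ℕ → M} (hg : ∀ y, ¬ d ∣ y → g y = 0) (n : ℕ) :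
    ∑ y ∈ range (d * n + 1), g y = ∑ i ∈ range (n + 1), g (d * i) := by
  obtain ⟨d, rfl⟩ : ∃ d', d = d' + 1 := ⟨d - 1, by omega⟩
  induction n with
  | zero => simp
  | succ n ih =>
    have hgap : ∑ x ∈ range d, g ((d + 1) * n + 1 + x) = 0 := by
      refine sum_eq_zero fun x hx => hg _ fun hdvd => ?_
      rw [add_assoc, Nat.dvd_add_right (dvd_mul_right _ _)] at hdvd
      have := Nat.le_of_dvd (by omega) hdvd
      simp only [mem_range] at hx
      omega
    rw [show (d + 1) * (n + 1) + 1 = (d + 1) * n + 1 + (d + 1) by ring, sum_range_add,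
      sum_range_succ (fun x => g ((d + 1) * n + 1 + x)), hgap, zero_add, ih,
      sum_range_succ (fun i => g ((d + 1) * i)) (n + 1)]
    congr 2
    ring

theorem stmt0_general {R : Type*} [CommRing R] (m : ℕ) (α : ℕ → R) (n j : ℕ) :
    dyckD m α ((m + 1) * n + j) j
      = ∑ i ∈ Finset.range (j + 1),
          dyckD m α ((m + 1) * n) ((m + 1) * i) * lamEntry m α i j := by
  set F := fun i => dyckD m α ((m + 1) * n) ((m + 1) * i) * lamEntry m α i j
  have hF : ∀ i ≥ min n j + 1, F i = 0 := fun i hi => by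
    rcases Nat.lt_or_ge n i with hn | hn
    · simp only [F, dyckD_eq_zero_of_lt m α (Nat.mul_lt_mul_left m.succ_pos |>.mpr hn), zero_mul]
    · simp only [F, lamEntry_eq_zero_of_lt m α (by omega : j < i), mul_zero]
  calc dyckD m α ((m + 1) * n + j) j
      = ∑ y ∈ range ((m + 1) * n + 1), dyckD m α ((m + 1) * n) y * dyckFrom m α y j j :=
        dyckD_add m α _ _ _
    _ = ∑ i ∈ range (n + 1), F i := by
        rw [sum_range_mul_add_one_eq m.succ_pos ?_ n]
        · simp only [F, lamEntry_eq_dyckFrom]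
        · intro y hy
          have hmod : ¬ (m + 1) * n ≡ y [MOD m + 1] :=
            fun h => hy ((h.dvd_iff dvd_rfl).mp (dvd_mul_right _ _))
          rw [dyckD_eq_zero_of_not_modEq m α hmod, zero_mul]
    _ = ∑ i ∈ range (min n j + 1), F i := eventually_constant_sum hF (by omega)
    _ = ∑ i ∈ range (j + 1), F i := (eventually_constant_sum hF (by omega)).symm

/-- The matrix of modified `m`-Stieltjes–Rogers polynomials factors as
`Ŝ^{(m)} = S^{(m)} · Λ^{(m)}`:
`Ŝ^{(m)}_{n,j}(α) = Σ_{i=0}^{j} S^{(m)}_{n,i}(α) · λ_{i,j}`. -/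
theorem stmt0 {R : Type*} [CommRing R] (m : ℕ) (hm : 0 < m) (α : ℕ → R) (n j : ℕ) :
    dyckD m α ((m + 1) * n + j) j
      = ∑ i ∈ Finset.range (j + 1),
          dyckD m α ((m + 1) * n) ((m + 1) * i) * lamEntry m α i j :=
  stmt0_general m α n j
end

section
/- Let m ≥ 1, let R be a commutative ring, and let α_m, α_{m+1}, … ∈ R with the convention α_i := 0 for 0 ≤ i ≤ m−1. Fix N ∈ ℕ and define N×N matrices over R indexed by 0,…,N−1: for each 0 ≤ i ≤ m−1, L_i has (L_i)_{k,k} = 1 for all k, (L_i)_{k,k−1} = α_{k(m+1)+i} for 1 ≤ k ≤ N−1, and all other entries 0; and U has U_{k,k} = α_{k(m+1)+m} for all k, U_{k,k+1} = 1 for 0 ≤ k ≤ N−2, and all other entries 0. Set H = L_0 · L_1 · ⋯ · L_{m−1} · U. Then: H_{n−1,n} = 1 for 1 ≤ n ≤ N−1; H_{i,n} = 0 whenever i ≤ n−2 or i ≥ n+m+1; and for all n ∈ ℕ and 0 ≤ k ≤ m with n+k ≤ N−1, H_{n+k,n} = Σ_{m ≥ ℓ_0 > ℓ_1 > ⋯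 > ℓ_k ≥ 0} ∏_{j=0}^{k} α_{(m+1)(n+j)+ℓ_j}. -/
open Finset

/-!
Right multiplication by `L_s` adds `α_{(l+1)(m+1)+s}` times column `l + 1` to column `l`.
Splitting a strictly decreasing tuple with values below `s + 1` according to whether its first
value is `s` gives the matching Pascal-type recurrence for `strictAntiSum`, so by induction on `s`
the `(k, l)` entry of `L_0 ⋯ L_{s-1}` is the sum over strictly decreasing `(k - l)`-tuples below
`s`. Right multiplication by `U` then combines columns `n - 1` and `n` by the same recurrence with
`s = m`; in column `0` the missing column `-1` would contribute tuples with `ℓ_0 < m`, whose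
products vanish because `α_i = 0` for `i < m`.
-/

def Lmat (R : Type*) [CommRing R] (N m : ℕ) (α : ℕ → R) (i : ℕ) :
    Matrix (Fin N) (Fin N) R :=
  Matrix.of fun k l =>
    if (k : ℕ) = (l : ℕ) then 1
    else if (k : ℕ) = (l : ℕ) + 1 then α ((k : ℕ) * (m + 1) + i) else 0

def Umat (R : Type*) [CommRing R] (N m : ℕ) (α : ℕ → R) :
    Matrix (Fin N) (Fin N) R :=
  Matrix.of fun k l =>
    if (l : ℕ) = (k : ℕ) + 1 then 1
    else if (k : ℕ) = (l : ℕ) then α ((k : ℕ) * (m + 1) + m) else 0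

lemma Fin.strictAnti_cons {α : Type*} [Preorder α] {n : ℕ} {f : Fin n → α} {a : α} :
    StrictAnti (Fin.cons a f : Fin (n + 1) → α) ↔ (∀ j, f j < a) ∧ StrictAnti f :=
  Fin.liftFun_cons (· > ·)

def strictAntiTuples (d s : ℕ) : Finset (Fin d → Fin s) :=
  univ.filter fun ℓ => ∀ x y, x < y → ℓ y < ℓ x

@[simp]
lemma mem_strictAntiTuples {d s : ℕ} {ℓ : Fin d → Fin s} :
    ℓ ∈ strictAntiTuples d s ↔ StrictAnti ℓ := by
  simp [strictAntiTuples, StrictAnti]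

lemma filter_lt_last_strictAntiTuples (d s : ℕ) :
    (strictAntiTuples d (s + 1)).filter (fun ℓ => ∀ j, ℓ j < Fin.last s) =
      (strictAntiTuples d s).map
        ⟨(Fin.castSucc ∘ ·), Function.Injective.comp_left (Fin.castSucc_injective s)⟩ := by
  ext ℓ
  simp only [mem_filter, mem_strictAntiTuples, mem_map, Function.Embedding.coeFn_mk]
  constructor
  · rintro ⟨hℓ, hlt⟩
    refine ⟨fun j => (ℓ j).castPred (hlt j).ne, fun x y hxy => ?_, funext fun j => by simp⟩
    simpa [Fin.castPred_lt_castPred_iff] using hℓ hxy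
  · rintro ⟨g, hg, rfl⟩
    exact ⟨Fin.strictMono_castSucc.comp_strictAnti hg, fun j => Fin.castSucc_lt_last (g j)⟩

section StrictAntiSum

variable {R : Type*} [CommRing R]

/-- `strictAntiSum w n d s = Σ_{s > ℓ_0 > ⋯ > ℓ_{d-1} ≥ 0} ∏_j w (n + j) ℓ_j`; with
`w r i = α ((m + 1) * r + i)` this is the right-hand side of the theorem. -/
def strictAntiSum (w : ℕ → ℕ → R) (n d s : ℕ) : R :=
  ∑ ℓ ∈ strictAntiTuples d s, ∏ j : Fin d, w (n + j) (ℓ j)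

variable (w : ℕ → ℕ → R) (n : ℕ)

@[simp]
lemma strictAntiSum_zero_left (s : ℕ) : strictAntiSum w n 0 s = 1 := by
  have : strictAntiTuples 0 s = univ := eq_univ_of_forall fun ℓ => by simp [StrictAnti]
  simp [strictAntiSum, this]

lemma strictAntiSum_of_lt {d s : ℕ} (h : s < d) : strictAntiSum w n d s = 0 := by
  refine sum_eq_zero fun ℓ hℓ => absurd h (not_lt.mpr ?_)
  simpa using Fintype.card_le_of_injective ℓ (mem_strictAntiTuples.mp hℓ).injective

lemma strictAntiSum_succ_left_of_head_eq_zero {d s : ℕ} (h : ∀ i < s, w n i = 0) :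
    strictAntiSum w n (d + 1) s = 0 :=
  sum_eq_zero fun ℓ _ => prod_eq_zero (mem_univ 0) (by simpa using h _ (ℓ 0).isLt)

lemma sum_strictAntiTuples_head_eq_last (d s : ℕ) :
    ∑ ℓ ∈ (strictAntiTuples (d + 1) (s + 1)).filter (fun ℓ => ℓ 0 = Fin.last s),
        ∏ j : Fin (d + 1), w (n + j) (ℓ j) =
      w n s * strictAntiSum w (n + 1) d s := by
  calc _ = ∑ t ∈ (strictAntiTuples d (s + 1)).filter (fun t => ∀ j, t j < Fin.last s),
          w n s * ∏ j : Fin d, w (n + 1 + j) (t j) := by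
        refine sum_nbij' Fin.tail (fun t => Fin.cons (Fin.last s) t) ?_ ?_ ?_ ?_ ?_
        · intro ℓ hℓ
          obtain ⟨hℓ, h0⟩ := mem_filter.mp hℓ
          rw [mem_strictAntiTuples] at hℓ
          exact mem_filter.mpr
            ⟨mem_strictAntiTuples.mpr (hℓ.comp_strictMono Fin.strictMono_succ),
            fun j => h0 ▸ hℓ (Fin.succ_pos j)⟩
        · intro t ht
          obtain ⟨ht, hlt⟩ := mem_filter.mp ht
          rw [mem_strictAntiTuples] at ht
          exact mem_filter.mpr
            ⟨mem_strictAntiTuples.mpr (Fin.strictAnti_cons.mpr ⟨hlt, ht⟩), rfl⟩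
        · intro ℓ hℓ
          simp [← (mem_filter.mp hℓ).2]
        · intro t _
          simp
        · intro ℓ hℓ
          simp [Fin.prod_univ_succ, (mem_filter.mp hℓ).2, Fin.tail, add_assoc, add_comm 1]
    _ = _ := by simp [filter_lt_last_strictAntiTuples, strictAntiSum, mul_sum]

lemma sum_strictAntiTuples_head_ne_last (d s : ℕ) :
    ∑ ℓ ∈ (strictAntiTuples (d + 1) (s + 1)).filter (fun ℓ => ¬ ℓ 0 = Fin.last s),
        ∏ j : Fin (d + 1), w (n + j) (ℓ j) =
      strictAntiSum w n (d + 1) s := by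
  rw [filter_congr (q := fun ℓ => ∀ j, ℓ j < Fin.last s) fun ℓ hℓ =>
    ⟨fun h j => ((mem_strictAntiTuples.mp hℓ).antitone (Fin.zero_le j)).trans_lt
      (Fin.lt_last_iff_ne_last.mpr h), fun h => (h 0).ne⟩]
  simp [filter_lt_last_strictAntiTuples, strictAntiSum]

lemma strictAntiSum_succ_succ (d s : ℕ) :
    strictAntiSum w n (d + 1) (s + 1) =
      w n s * strictAntiSum w (n + 1) d s + strictAntiSum w n (d + 1) s := by
  rw [strictAntiSum, ← sum_filter_add_sum_filter_not _ (fun ℓ => ℓ 0 = Fin.last s),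
    sum_strictAntiTuples_head_eq_last, sum_strictAntiTuples_head_ne_last]

/-- The `(k, l)` entry of `L_0 ⋯ L_{s-1}`, as shown by `prod_Lmat_apply`. -/
def lowerEntry (w : ℕ → ℕ → R) (s k l : ℕ) : R :=
  if l ≤ k then strictAntiSum w (l + 1) (k - l) s else 0

lemma lowerEntry_of_lt (s : ℕ) {k l : ℕ} (h : k < l) : lowerEntry w s k l = 0 :=
  if_neg (not_le.mpr h)

lemma lowerEntry_add_left (s l d : ℕ) :
    lowerEntry w s (l + d) l = strictAntiSum w (l + 1) d s := by
  simp [lowerEntry]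

lemma lowerEntry_of_add_lt {s k l : ℕ} (h : l + s < k) : lowerEntry w s k l = 0 := by
  rw [lowerEntry, if_pos (by omega), strictAntiSum_of_lt w _ (by omega)]

lemma lowerEntry_succ (s k l : ℕ) :
    lowerEntry w (s + 1) k l = lowerEntry w s k l + lowerEntry w s k (l + 1) * w (l + 1) s := by
  rcases lt_trichotomy k l with hkl | rfl | hlk
  · simp [lowerEntry_of_lt w _ hkl, lowerEntry_of_lt w _ (hkl.trans (Nat.lt_succ_self l))]
  · simp [lowerEntry]
  · obtain ⟨d, rfl⟩ := Nat.exists_eq_add_of_lt hlk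
    simp only [lowerEntry, if_pos hlk.le]
    rw [if_pos (by omega), show l + d + 1 - l = d + 1 by omega,
      show l + d + 1 - (l + 1) = d by omega, strictAntiSum_succ_succ]
    ring

end StrictAntiSum

section Matrices

variable {R : Type*} [CommRing R]

variable {N m : ℕ} {α : ℕ → R}

lemma mul_Lmat_apply (A : Matrix (Fin N) (Fin N) R) (F : ℕ → ℕ → R)
    (hA : ∀ k l : Fin N, A k l = F k l) (hF : ∀ k l, k < l → F k l = 0) (i : ℕ)
    (k l : Fin N) :
    (A * Lmat R N m α i) k l = F k l + F k (l + 1) * α ((l + 1) * (m + 1) + i) := by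
  simp only [Matrix.mul_apply, hA, Lmat, Matrix.of_apply]
  rw [Fin.sum_univ_eq_sum_range (fun j => F k j * (if j = l then 1
    else if j = l + 1 then α (j * (m + 1) + i) else 0)), sum_eq_add (l : ℕ) (l + 1) (by omega)]
  · simp
  · intro j _ hj
    simp [hj.1, hj.2]
  · simp
  · intro h
    simp [hF k (l + 1) (by simp at h; omega)]

lemma mul_Umat_apply (A : Matrix (Fin N) (Fin N) R) (F : ℕ → ℕ → R)
    (hA : ∀ k l : Fin N, A k l = F k l) (k l : Fin N) :
    (A * Umat R N m α) k l =
      (if (l : ℕ) = 0 then 0 else F k (l - 1)) + F k l * α (l * (m + 1) + m) := by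
  simp only [Matrix.mul_apply, hA, Umat, Matrix.of_apply]
  rw [Fin.sum_univ_eq_sum_range (fun j => F k j * (if (l : ℕ) = j + 1 then 1
    else if j = l then α (j * (m + 1) + m) else 0))]
  rcases (l : ℕ).eq_zero_or_pos with hl | hl
  · rw [sum_eq_single (l : ℕ)]
    · simp [hl]
    · intro j _ hj
      rw [if_neg (by omega), if_neg hj, mul_zero]
    · simp
  · rw [sum_eq_add ((l : ℕ) - 1) l (by omega)]
    · simp [Nat.sub_add_cancel hl, hl.ne']
    · intro j _ hj
      rw [if_neg (by omega), if_neg hj.2, mul_zero]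
    · simp
      omega
    · simp

lemma prod_Lmat_apply (s : ℕ) (k l : Fin N) :
    ((List.range s).map (Lmat R N m α)).prod k l =
      lowerEntry (fun r i => α ((m + 1) * r + i)) s k l := by
  induction s generalizing k l with
  | zero =>
    rcases lt_trichotomy (k : ℕ) l with h | h | h
    · simp [lowerEntry_of_lt _ _ h, Fin.ne_of_lt h]
    · simp [lowerEntry, Fin.ext h]
    · simp [lowerEntry_of_add_lt _ (by omega : (l : ℕ) + 0 < k), Fin.ne_of_gt h]
  | succ s ih =>
    rw [List.range_succ, List.map_append, List.prod_append, List.map_singleton,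
      List.prod_singleton, mul_Lmat_apply _ _ ih (fun _ _ h => lowerEntry_of_lt _ _ h),
      lowerEntry_succ, mul_comm _ (m + 1)]

end Matrices

/-- The product `H = L_0 · L_1 ⋯ L_{m-1} · U` is an `(m+2)`-banded unit-lower-Hessenberg
matrix whose entries are `H_{n-1,n} = 1`, `H_{i,n} = 0` for `i ≤ n-2` or `i ≥ n+m+1`, and
`H_{n+k,n} = Σ_{m ≥ ℓ_0 > ⋯ > ℓ_k ≥ 0} ∏_{j=0}^{k} α_{(m+1)(n+j)+ℓ_j}` for `0 ≤ k ≤ m`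
(with the convention `α_i = 0` for `i < m`). -/
theorem stmt3 {R : Type*} [CommRing R] (m : ℕ) (N : ℕ) (α : ℕ → R)
    (hα0 : ∀ i, i < m → α i = 0) :
    ∀ H : Matrix (Fin N) (Fin N) R,
      H = ((List.range m).map (Lmat R N m α)).prod * Umat R N m α →
      (∀ i n : Fin N, (n : ℕ) = (i : ℕ) + 1 → H i n = 1) ∧
      (∀ i n : Fin N, ((i : ℕ) + 2 ≤ (n : ℕ) ∨ (n : ℕ) + m + 1 ≤ (i : ℕ)) → H i n = 0) ∧
      (∀ n k : ℕ, k ≤ m → ∀ hnk : n + k < N,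
        H ⟨n + k, hnk⟩ ⟨n, by omega⟩
          = ∑ ℓ ∈ Finset.univ.filter
              (fun ℓ : Fin (k + 1) → Fin (m + 1) => ∀ x y, x < y → ℓ y < ℓ x),
              ∏ j : Fin (k + 1), α ((m + 1) * (n + (j : ℕ)) + (ℓ j : ℕ))) := by
  intro H rfl
  have hH := mul_Umat_apply (m := m) (α := α) _ _ (prod_Lmat_apply (N := N) (m := m) (α := α) m)
  refine ⟨fun i n hn => ?_, fun i n hin => ?_, fun n k hk hnk => ?_⟩
  · simp [hH, hn, lowerEntry]
  · rw [hH]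
    rcases hin with h | h
    · simp [lowerEntry_of_lt _ _ (by omega : (i : ℕ) < n - 1),
        lowerEntry_of_lt _ _ (by omega : (i : ℕ) < n)]
    · simp [lowerEntry_of_add_lt _ (by omega : (n : ℕ) - 1 + m < i),
        lowerEntry_of_add_lt _ (by omega : (n : ℕ) + m < i)]
  · set w : ℕ → ℕ → R := fun r i => α ((m + 1) * r + i) with hw
    have hU (l : ℕ) : α (l * (m + 1) + m) = w l m := by rw [hw, mul_comm]
    change _ = strictAntiSum w n (k + 1) (m + 1)
    rw [hH, strictAntiSum_succ_succ, hU]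
    rcases n with _ | p
    · rw [strictAntiSum_succ_left_of_head_eq_zero w 0 fun i hi => by simpa [hw] using hα0 i hi]
      rw [lowerEntry_add_left]
      simp [mul_comm]
    · simp only [if_neg (Nat.succ_ne_zero p), Nat.add_sub_cancel]
      rw [show p + 1 + k = p + (k + 1) by omega, lowerEntry_add_left,
        show p + (k + 1) = p + 1 + k by omega, lowerEntry_add_left]
      ring
end

section
/- Let R be a commutative ring and H = (h_{n,k})_{n,k∈ℕ} a unit-lower-Hessenberg matrix over R, i.e. h_{n,n+1} = 1 for all n and h_{n,k} = 0 whenever k ≥ n+2. Define the polynomial sequence (P_n)_{n∈ℕ} in R[x] by P_0(x) = 1 and P_{n+1}(x) = x·P_n(x) − Σ_{k=0}^{n} h_{n,k}·P_k(x). Then for every n ≥ 1, P_n is the characteristic polynomial of the n×n truncation H_n = (h_{i,j})_{0≤i,j≤n−1}; that is, P_n(x) = det(x·I_n − H_n). In particular each P_n is monic of degree n. -/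
/-!
Replace the last row of the `(m+1)`-truncation of a unit-lower-Hessenberg matrix `A` by an
arbitrary row `v`. In the last column only two entries survive: the superdiagonal `-1` and `v m`.
Expanding along it gives, by induction on `m`, `det = ∑_{k ≤ m} v k · det A_k`. Taking for `v` the
row `m` of `X - H` shows that the characteristic polynomials of the truncations satisfy the
recurrence defining `P`.
-/

open Polynomial

namespace Matrix

variable {S : Type*} [CommRing S]

def truncWithLastRow (A : ℕ → ℕ → S) (v : ℕ → S) (m : ℕ) :
    Matrix (Fin (m + 1)) (Fin (m + 1)) S :=
  of fun i j => if (i : ℕ) = m then v j else A i j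

theorem det_truncWithLastRow (A : ℕ → ℕ → S) (hsup : ∀ i, A i (i + 1) = -1)
    (hband : ∀ i j, i + 2 ≤ j → A i j = 0) (v : ℕ → S) (m : ℕ) :
    (truncWithLastRow A v m).det
      = ∑ k ∈ Finset.range (m + 1), v k * (of fun i j : Fin k => A i j).det := by
  induction m with
  | zero => simp [truncWithLastRow]
  | succ m ih =>
    have hlast : (truncWithLastRow A v (m + 1)).submatrix (Fin.last (m + 1)).succAbove
        (Fin.last (m + 1)).succAbove = of fun i j : Fin (m + 1) => A i j := by
      ext i j
      simp [truncWithLastRow, Fin.succAbove_last, i.isLt.ne]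
    have hprev : (truncWithLastRow A v (m + 1)).submatrix (Fin.last m).castSucc.succAbove
        (Fin.last (m + 1)).succAbove = truncWithLastRow A v m := by
      ext i j
      by_cases hi : (i : ℕ) < m
      · simp [truncWithLastRow, Fin.succAbove, Fin.lt_def, hi, hi.ne,
          (hi.trans m.lt_succ_self).ne]
      · simp [truncWithLastRow, Fin.succAbove, Fin.lt_def, show (i : ℕ) = m by omega]
    rw [det_succ_column _ (Fin.last (m + 1)),
      Fintype.sum_eq_add (Fin.last m).castSucc (Fin.last (m + 1)) (by simp [Fin.ext_iff]),
      hlast, hprev, ih, Finset.sum_range_succ _ (m + 1)]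
    · simp [truncWithLastRow, hsup]
    · rintro i ⟨hi₁, hi₂⟩
      have hi : (i : ℕ) < m := by
        simp only [ne_eq, Fin.ext_iff, Fin.val_last, Fin.val_castSucc] at hi₁ hi₂
        omega
      simp [truncWithLastRow, hband i (m + 1) (by omega), (hi.trans m.lt_succ_self).ne]

theorem det_of_succ_of_hessenberg (A : ℕ → ℕ → S) (hsup : ∀ i, A i (i + 1) = -1)
    (hband : ∀ i j, i + 2 ≤ j → A i j = 0) (m : ℕ) :
    (of fun i j : Fin (m + 1) => A i j).det
      = ∑ k ∈ Finset.range (m + 1), A m k * (of fun i j : Fin k => A i j).det := by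
  rw [← det_truncWithLastRow A hsup hband]
  congr 1
  ext i j
  by_cases hi : (i : ℕ) = m <;> simp [truncWithLastRow, hi]

theorem charpoly_of_succ_of_hessenberg {R : Type*} [CommRing R] (h : ℕ → ℕ → R)
    (hsup : ∀ i, h i (i + 1) = 1) (hband : ∀ i j, i + 2 ≤ j → h i j = 0) (m : ℕ) :
    (of fun i j : Fin (m + 1) => h i j).charpoly
      = X * (of fun i j : Fin m => h i j).charpoly
        - ∑ k ∈ Finset.range (m + 1), C (h m k) * (of fun i j : Fin k => h i j).charpoly := by
  set A : ℕ → ℕ → R[X] := fun i j => (if i = j then X else 0) - C (h i j)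
  have hcharmatrix : ∀ k,
      (of fun i j : Fin k => h i j).charpoly = (of fun i j : Fin k => A i j).det := by
    intro k
    rw [charpoly]
    congr 1
    ext i j
    simp [A, charmatrix_apply, diagonal_apply, Fin.ext_iff]
  simp_rw [hcharmatrix]
  rw [det_of_succ_of_hessenberg A (by simp [A, hsup])
    (fun i j hij => by simp [A, hband i j hij]; omega)]
  simp [A, sub_mul, Finset.sum_sub_distrib]

end Matrix

/-- For a unit-lower-Hessenberg matrix `H = (h_{n,k})` over a commutative ring, the monic
polynomials defined by `P_0 = 1` and `P_{n+1}(x) = x·P_n(x) − Σ_{k=0}^{n} h_{n,k}·P_k(x)`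
are the characteristic polynomials of the truncations `H_n`:
`P_n(x) = det(x·I_n − H_n)`; in particular each `P_n` is monic of degree `n`. -/
theorem stmt4 {R : Type*} [CommRing R] [Nontrivial R]
    (h : ℕ → ℕ → R)
    (hsup : ∀ n, h n (n + 1) = 1)
    (hband : ∀ n k, n + 2 ≤ k → h n k = 0)
    (P : ℕ → Polynomial R) (hP0 : P 0 = 1)
    (hPrec : ∀ n, P (n + 1)
      = X * P n - ∑ k ∈ Finset.range (n + 1), C (h n k) * P k) :
    (∀ n : ℕ, 1 ≤ n →
      P n = Matrix.charpoly (Matrix.of fun i j : Fin n => h (i : ℕ) (j : ℕ))) ∧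
    (∀ n : ℕ, (P n).Monic ∧ (P n).natDegree = n) := by
  have hchar : ∀ n, P n = (Matrix.of fun i j : Fin n => h i j).charpoly := by
    intro n
    induction n using Nat.strong_induction_on with
    | _ n ih =>
      cases n with
      | zero => simp [hP0, Matrix.charpoly]
      | succ m =>
        rw [hPrec, Matrix.charpoly_of_succ_of_hessenberg h hsup hband, ih m m.lt_succ_self]
        congr 1
        refine Finset.sum_congr rfl fun k hk => ?_
        rw [ih k (by simpa [Nat.lt_succ_iff] using hk)]
  refine ⟨fun n _ => hchar n, fun n => ?_⟩
  rw [hchar n]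
  exact ⟨Matrix.charpoly_monic _, by simp⟩
end

section
/- Let m ≥ 1 and let (P_n)_{n∈ℕ} be the monic real polynomials defined by P_0(x) = 1 and P_{n+1}(x) = x·P_n(x) − Σ_{k=0}^{min(n,m)} γ_{n−k}^{[k]}·P_{n−k}(x), where all γ_n^{[k]} ∈ ℝ and γ_n^{[m]} > 0 for all n. Suppose there exist real constants γ^{[m]} > 0 and γ^{[k]} ≥ 0 for 0 ≤ k ≤ m−1, a nondecreasing unbounded sequence of positive reals (f_n), and for each 0 ≤ k ≤ m a sequence (ε_n^{(k)}) with ε_n^{(k)}/f_n^{k+1} → 0 as n → ∞, such that |γ_n^{[k]}| ≤ γ^{[k]}·f_n^{k+1} + ε_n^{(k)} for all n. Let C = inf_{t > 0} ( t + Σ_{k=0}^{m} γ^{[k]}·t^{−k} ). Then the largest modulus of a complex root of P_n is at most C·f_n + o(f_n): there exists a sequence (e_n) with e_n/f_n → 0 such that every complex root z of P_n satisfies |z| ≤ C·f_n + e_n. -/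
/-! If `‖z‖ ≥ d + ∑ₖ |γ_{j-k}^{[k]}| / dᵏ` for every `j < n`, the recurrence gives inductively
`|P_{j+1}(z)| ≥ d |P_j(z)|`, hence `|P_n(z)| ≥ dⁿ > 0`: roots of `P_n` lie below this threshold.
By monotonicity of `f`, every `γ_i^{[k]}` with `i < n` is bounded by
`Γ_k f_n^{k+1} + max_{i ≤ n} |ε_i^{(k)}|`, and the running maximum is still `o(f_n^{k+1})` because
`f_n → ∞`. Taking `d = t f_n` bounds the roots by `(t + ∑ₖ Γ_k / tᵏ) f_n + o(f_n)` for each fixed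
`t > 0`, and the error of the best of these bounds is `o(f_n)`. -/

open Polynomial Filter Finset Topology Asymptotics

section Recurrence

variable {𝕜 : Type*} [NormedDivisionRing 𝕜] {a : ℕ → 𝕜} {z : 𝕜} {c : ℕ → ℕ → 𝕜} {N : ℕ → ℕ}
  {d : ℝ}

theorem mul_norm_le_norm_succ_of_recurrence {j : ℕ} (hd : 0 < d)
    (hrec : a (j + 1) = z * a j - ∑ k ∈ range (N j + 1), c j k * a (j - k))
    (hz : d + ∑ k ∈ range (N j + 1), ‖c j k‖ / d ^ k ≤ ‖z‖)
    (ha : ∀ k ≤ N j, d ^ k * ‖a (j - k)‖ ≤ ‖a j‖) :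
    d * ‖a j‖ ≤ ‖a (j + 1)‖ := by
  set s := ∑ k ∈ range (N j + 1), ‖c j k‖ / d ^ k
  have hsum : ‖∑ k ∈ range (N j + 1), c j k * a (j - k)‖ ≤ s * ‖a j‖ := by
    rw [sum_mul]
    refine (norm_sum_le _ _).trans (sum_le_sum fun k hk => ?_)
    rw [norm_mul, div_mul_eq_mul_div, le_div_iff₀ (pow_pos hd k), mul_assoc, mul_comm ‖a _‖]
    exact mul_le_mul_of_nonneg_left (ha k (Nat.lt_succ_iff.mp (mem_range.mp hk))) (norm_nonneg _)
  calc d * ‖a j‖ ≤ (‖z‖ - s) * ‖a j‖ := by gcongr; linarith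
    _ ≤ ‖z * a j‖ - ‖∑ k ∈ range (N j + 1), c j k * a (j - k)‖ := by rw [norm_mul]; linarith
    _ ≤ ‖a (j + 1)‖ := hrec ▸ norm_sub_norm_le _ _

theorem pow_mul_norm_le_of_recurrence (hd : 0 < d) (hN : ∀ j, N j ≤ j)
    (hrec : ∀ j, a (j + 1) = z * a j - ∑ k ∈ range (N j + 1), c j k * a (j - k))
    {n : ℕ} (hz : ∀ j < n, d + ∑ k ∈ range (N j + 1), ‖c j k‖ / d ^ k ≤ ‖z‖) :
    ∀ j ≤ n, ∀ i ≤ j, d ^ (j - i) * ‖a i‖ ≤ ‖a j‖ := by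
  intro j
  induction j with
  | zero => intro _ i hi; simp [Nat.le_zero.mp hi]
  | succ j ih =>
    intro hj i hi
    have hstep := mul_norm_le_norm_succ_of_recurrence hd (hrec j) (hz j hj) fun k hk => by
      simpa [Nat.sub_sub_self (hk.trans (hN j))] using ih (by omega) (j - k) (Nat.sub_le j k)
    rcases hi.eq_or_lt with rfl | hi
    · simp
    · calc d ^ (j + 1 - i) * ‖a i‖ = d * (d ^ (j - i) * ‖a i‖) := by
            rw [Nat.sub_add_comm (by omega), pow_succ]; ring
        _ ≤ d * ‖a j‖ := by gcongr; exact ih (by omega) i (by omega)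
        _ ≤ ‖a (j + 1)‖ := hstep

end Recurrence

section MultipleOrthogonal

variable {m : ℕ} {γ : ℕ → ℕ → ℝ} {P : ℕ → ℝ[X]}

theorem norm_lt_of_aeval_eq_zero (hP0 : P 0 = 1)
    (hPrec : ∀ n, P (n + 1) = X * P n
      - ∑ k ∈ range (min n m + 1), C (γ (n - k) k) * P (n - k))
    {n : ℕ} {B : ℕ → ℝ} (hB : ∀ i < n, ∀ k ≤ m, |γ i k| ≤ B k) {d : ℝ} (hd : 0 < d)
    {z : ℂ} (hz : aeval z (P n) = 0) :
    ‖z‖ < d + ∑ k ∈ range (m + 1), B k / d ^ k := by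
  by_contra! hzd
  have hcoeff : ∀ j < n, d + ∑ k ∈ range (min j m + 1), ‖(γ (j - k) k : ℂ)‖ / d ^ k ≤ ‖z‖ := by
    refine fun j hj => le_trans ?_ hzd
    gcongr d + ?_
    refine (sum_le_sum fun k hk => ?_).trans (sum_le_sum_of_subset_of_nonneg ?_ fun k hk _ => ?_)
    · have hk : k ≤ min j m := Nat.lt_succ_iff.mp (mem_range.mp hk)
      rw [Complex.norm_real, Real.norm_eq_abs]
      gcongr
      exact hB _ (by omega) k (hk.trans (min_le_right j m))
    · exact range_subset_range.mpr (by omega)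
    · have hk : k ≤ m := Nat.lt_succ_iff.mp (mem_range.mp hk)
      exact div_nonneg ((abs_nonneg _).trans (hB 0 (by omega) k hk)) (pow_nonneg hd.le k)
  have hgrowth := pow_mul_norm_le_of_recurrence (a := fun j => aeval z (P j)) hd
    (fun j => min_le_left j m) (fun j => by simp [hPrec]) hcoeff n le_rfl 0 n.zero_le
  simp only [hP0, hz, map_one, norm_one, norm_zero, mul_one, Nat.sub_zero] at hgrowth
  exact (pow_pos hd n).not_ge hgrowth

theorem norm_le_of_aeval_eq_zero (hP0 : P 0 = 1)
    (hPrec : ∀ n, P (n + 1) = X * P n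
      - ∑ k ∈ range (min n m + 1), C (γ (n - k) k) * P (n - k))
    {Γ : ℕ → ℝ} (hΓ : ∀ k ≤ m, 0 ≤ Γ k) {f : ℕ → ℝ} (hf : ∀ n, 0 < f n) (hfmono : Monotone f)
    {ε : ℕ → ℕ → ℝ} (hbound : ∀ n k, k ≤ m → |γ n k| ≤ Γ k * f n ^ (k + 1) + ε k n)
    {t : ℝ} (ht : 0 < t) {n : ℕ} {z : ℂ} (hz : aeval z (P n) = 0) :
    ‖z‖ ≤ (t + ∑ k ∈ range (m + 1), Γ k / t ^ k) * f n
      + ∑ k ∈ range (m + 1), partialSups (fun i => |ε k i|) n / (t * f n) ^ k := by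
  have hB : ∀ i < n, ∀ k ≤ m,
      |γ i k| ≤ Γ k * f n ^ (k + 1) + partialSups (fun i => |ε k i|) n := fun i hi k hk =>
    (hbound i k hk).trans <| add_le_add
      (by gcongr; exacts [hΓ k hk, (hf i).le, hfmono hi.le])
      ((le_abs_self _).trans (le_partialSups_of_le (fun i => |ε k i|) hi.le))
  refine (norm_lt_of_aeval_eq_zero hP0 hPrec hB (mul_pos ht (hf n)) hz).le.trans_eq ?_
  rw [add_mul, sum_mul, add_assoc, ← sum_add_distrib]
  congr 1
  refine sum_congr rfl fun k _ => ?_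
  have := (hf n).ne'
  have := ht.ne'
  field_simp
  ring

end MultipleOrthogonal

theorem isLittleO_partialSups_abs {u b : ℕ → ℝ} (hu : u =o[atTop] b) (hb : Monotone b)
    (hb_top : Tendsto b atTop atTop) :
    (fun n => partialSups (fun i => |u i|) n) =o[atTop] b := by
  refine IsLittleO.of_bound fun c hc => ?_
  obtain ⟨N, hN⟩ := eventually_atTop.mp
    ((hu.bound hc).and (hb_top.eventually_ge_atTop 0))
  filter_upwards [eventually_ge_atTop N,
    hb_top.eventually_ge_atTop (partialSups (fun i => |u i|) N / c)] with n hn hbn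
  have hbn' : partialSups (fun i => |u i|) N ≤ c * b n := by rwa [div_le_iff₀' hc] at hbn
  have hsup0 : 0 ≤ partialSups (fun i => |u i|) n :=
    (abs_nonneg _).trans (le_partialSups_of_le (fun i => |u i|) n.zero_le)
  rw [Real.norm_of_nonneg hsup0, Real.norm_of_nonneg (hN n hn).2]
  refine partialSups_le _ _ _ fun i hi => ?_
  rcases lt_or_ge i N with hiN | hiN
  · exact (le_partialSups_of_le (fun i => |u i|) hiN.le).trans hbn'
  · have := (hN i hiN).1
    rw [Real.norm_eq_abs, Real.norm_of_nonneg (hN i hiN).2] at this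
    exact this.trans (by gcongr; exact hb hi)

theorem exists_tendsto_div_and_le_sInf_mul_add {S : ℕ → Set ℝ} {f : ℕ → ℝ} (hf : ∀ n, 0 < f n)
    {g : ℝ → ℝ} {E : ℝ → ℕ → ℝ} (hE : ∀ t > 0, Tendsto (fun n => E t n / f n) atTop (𝓝 0))
    (hS : ∀ t > 0, ∀ n, ∀ x ∈ S n, x ≤ g t * f n + E t n) :
    ∃ e : ℕ → ℝ, Tendsto (fun n => e n / f n) atTop (𝓝 0) ∧
      ∀ n, ∀ x ∈ S n, x ≤ sInf {y | ∃ t, 0 < t ∧ y = g t} * f n + e n := by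
  set c := sInf {y | ∃ t, 0 < t ∧ y = g t}
  -- the error of the best bound in the family; `max _ 0` keeps the infimum bounded below
  set e : ℕ → ℝ := fun n => ⨅ t : Set.Ioi (0 : ℝ), max ((g t - c) * f n + E t n) 0
  have he0 : ∀ n, 0 ≤ e n := fun n => le_ciInf fun _ => le_max_right _ _
  have he_le : ∀ n, ∀ t > 0, e n ≤ max ((g t - c) * f n + E t n) 0 := fun n t ht =>
    ciInf_le ⟨0, by rintro _ ⟨_, rfl⟩; exact le_max_right _ _⟩ (⟨t, ht⟩ : Set.Ioi (0 : ℝ))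
  refine ⟨e, tendsto_order.2 ⟨fun a ha => .of_forall fun n => ha.trans_le ?_, fun δ hδ => ?_⟩,
    fun n x hx => ?_⟩
  · exact div_nonneg (he0 n) (hf n).le
  · have hne : {y | ∃ t, 0 < t ∧ y = g t}.Nonempty := ⟨g 1, 1, one_pos, rfl⟩
    obtain ⟨_, ⟨t, ht, rfl⟩, hgt⟩ :=
      exists_lt_of_csInf_lt hne (lt_add_of_pos_right c (half_pos hδ))
    filter_upwards [(tendsto_order.1 (hE t ht)).2 _ (half_pos hδ)] with n hn
    rw [div_lt_iff₀ (hf n)] at hn ⊢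
    refine (he_le n t ht).trans_lt (max_lt ?_ (mul_pos hδ (hf n)))
    nlinarith [hf n]
  · have : ∀ t : Set.Ioi (0 : ℝ), x - c * f n ≤ max ((g t - c) * f n + E t n) 0 := fun t =>
      le_max_of_le_left (by linarith [hS t t.2 n x hx])
    linarith [le_ciInf this]

theorem tendsto_sum_partialSups_div {m : ℕ} {f : ℕ → ℝ} (hf : ∀ n, 0 < f n) (hfmono : Monotone f)
    (hftop : Tendsto f atTop atTop) {ε : ℕ → ℕ → ℝ}
    (hε : ∀ k ≤ m, Tendsto (fun n => ε k n / f n ^ (k + 1)) atTop (𝓝 0)) {t : ℝ} (ht : t ≠ 0) :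
    Tendsto (fun n => (∑ k ∈ range (m + 1), partialSups (fun i => |ε k i|) n / (t * f n) ^ k)
      / f n) atTop (𝓝 0) := by
  have hA : ∀ k ≤ m,
      Tendsto (fun n => partialSups (fun i => |ε k i|) n / f n ^ (k + 1)) atTop (𝓝 0) := by
    intro k hk
    have hne : ∀ n, f n ^ (k + 1) ≠ 0 := fun n => (pow_pos (hf n) _).ne'
    refine (isLittleO_iff_tendsto fun n h => absurd h (hne n)).mp <| isLittleO_partialSups_abs
      ((isLittleO_iff_tendsto fun n h => absurd h (hne n)).mpr (hε k hk))
      (fun i j hij => pow_le_pow_left₀ (hf i).le (hfmono hij) _)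
      ((tendsto_pow_atTop k.succ_ne_zero).comp hftop)
  have hsum := tendsto_finsetSum (range (m + 1)) fun k hk =>
    (hA k (Nat.lt_succ_iff.mp (mem_range.mp hk))).div_const (t ^ k)
  simp only [zero_div, sum_const_zero] at hsum
  refine hsum.congr fun n => ?_
  rw [sum_div]
  refine sum_congr rfl fun k _ => ?_
  have := (hf n).ne'
  field_simp
  ring

theorem stmt7_general (m : ℕ)
    (γ : ℕ → ℕ → ℝ)
    (P : ℕ → Polynomial ℝ) (hP0 : P 0 = 1)
    (hPrec : ∀ n, P (n + 1) = X * P n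
      - ∑ k ∈ Finset.range (min n m + 1), C (γ (n - k) k) * P (n - k))
    (Γ : ℕ → ℝ) (hΓm : 0 < Γ m) (hΓ : ∀ k, k < m → 0 ≤ Γ k)
    (f : ℕ → ℝ) (hfpos : ∀ n, 0 < f n) (hfmono : Monotone f)
    (hfunb : ∀ M : ℝ, ∃ n, M < f n)
    (ε : ℕ → ℕ → ℝ)
    (hε : ∀ k, k ≤ m →
      Tendsto (fun n => ε k n / (f n) ^ (k + 1)) atTop (nhds 0))
    (hbound : ∀ n k, k ≤ m → |γ n k| ≤ Γ k * (f n) ^ (k + 1) + ε k n) :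
    ∃ e : ℕ → ℝ, Tendsto (fun n => e n / f n) atTop (nhds 0) ∧
      ∀ n, ∀ z : ℂ, Polynomial.aeval z (P n) = 0 →
        ‖z‖ ≤
          (sInf {y : ℝ | ∃ t : ℝ, 0 < t ∧
            y = t + ∑ k ∈ Finset.range (m + 1), Γ k / t ^ k}) * f n + e n := by
  have hΓ0 : ∀ k ≤ m, 0 ≤ Γ k := fun k hk => hk.lt_or_eq.elim (hΓ k) fun h => h ▸ hΓm.le
  have hftop : Tendsto f atTop atTop :=
    tendsto_atTop_atTop_of_monotone hfmono fun b => (hfunb b).imp fun _ => le_of_lt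
  obtain ⟨e, he, hroots⟩ := exists_tendsto_div_and_le_sInf_mul_add
    (S := fun n => norm '' {z : ℂ | aeval z (P n) = 0}) hfpos
    (fun t ht => tendsto_sum_partialSups_div hfpos hfmono hftop hε ht.ne')
    fun t ht n _ ⟨z, hz, hx⟩ =>
      hx ▸ norm_le_of_aeval_eq_zero hP0 hPrec hΓ0 hfpos hfmono hbound ht hz
  exact ⟨e, he, fun n z hz => hroots n _ ⟨z, hz, rfl⟩⟩

/-- Upper bound for the largest zero (in modulus) of an `m`-orthogonal polynomial sequence
from the asymptotic behaviour of its recurrence coefficients: if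
`|γ_n^{[k]}| ≤ γ^{[k]}·f_n^{k+1} + o(f_n^{k+1})` for a nondecreasing unbounded positive
sequence `(f_n)`, then every root `z` of `P_n` satisfies
`|z| ≤ (inf_{t>0} (t + Σ_{k=0}^{m} γ^{[k]}·t^{−k}))·f_n + o(f_n)`. -/
theorem stmt7 (m : ℕ) (hm : 1 ≤ m)
    (γ : ℕ → ℕ → ℝ) (hγm : ∀ n, 0 < γ n m)
    (P : ℕ → Polynomial ℝ) (hP0 : P 0 = 1)
    (hPrec : ∀ n, P (n + 1) = X * P n
      - ∑ k ∈ Finset.range (min n m + 1), C (γ (n - k) k) * P (n - k))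
    (Γ : ℕ → ℝ) (hΓm : 0 < Γ m) (hΓ : ∀ k, k < m → 0 ≤ Γ k)
    (f : ℕ → ℝ) (hfpos : ∀ n, 0 < f n) (hfmono : Monotone f)
    (hfunb : ∀ M : ℝ, ∃ n, M < f n)
    (ε : ℕ → ℕ → ℝ)
    (hε : ∀ k, k ≤ m →
      Tendsto (fun n => ε k n / (f n) ^ (k + 1)) atTop (nhds 0))
    (hbound : ∀ n k, k ≤ m → |γ n k| ≤ Γ k * (f n) ^ (k + 1) + ε k n) :
    ∃ e : ℕ → ℝ, Tendsto (fun n => e n / f n) atTop (nhds 0) ∧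
      ∀ n, ∀ z : ℂ, Polynomial.aeval z (P n) = 0 →
        ‖z‖ ≤
          (sInf {y : ℝ | ∃ t : ℝ, 0 < t ∧
            y = t + ∑ k ∈ Finset.range (m + 1), Γ k / t ^ k}) * f n + e n :=
  stmt7_general m γ P hP0 hPrec Γ hΓm hΓ f hfpos hfmono hfunb ε hε hbound
end

section
/- Let r ≥ s ≥ 0 with r ≥ 1, let 1 ≤ λ_1 < ⋯ < λ_s ≤ r be integers, let K be a field of characteristic zero, and let a_1, …, a_{r+1}, b_1, …, b_s ∈ K satisfy b_j + q ≠ 0 in K for every integer q ≥ −1 and every 1 ≤ j ≤ s. For k ≥ −1 set a_i^{(k)} = a_i + ⌈(k+1−i)/(r+1)⌉ for 1 ≤ i ≤ r+1 and b_j^{(k)} = b_j + ⌈(k+1−λ_j)/r⌉ for 1 ≤ j ≤ s, and let g_k ∈ K[[t]] be the formal power series whose n-th coefficient is c_n^{(k)} = ∏_{i=1}^{r+1} (a_i^{(k)})_n / ( n! · ∏_{j=1}^{s} (b_j^{(k)})_n ) (the hypergeometric series r+1F_s(a_1^{(k)},…,a_{r+1}^{(k)}; b_1^{(k)},…,b_s^{(k)};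 t)). For k ∈ ℕ define α_{k+r} ∈ K by: α_{k+r} = ∏_{1≤i≤r+1, i≠[k]_{r+1}} a_i^{(k)} / ∏_{j=1}^{s} b_j^{(k)} if [k]_r ∉ {λ_1,…,λ_s}; and α_{k+r} = (b_ℓ^{(k)} − a_{[k]_{r+1}}^{(k)}) · ∏_{1≤i≤r+1, i≠[k]_{r+1}} a_i^{(k)} / ( (b_ℓ^{(k)} − 1) · ∏_{j=1}^{s} b_j^{(k)} ) if [k]_r = λ_ℓ for some 1 ≤ ℓ ≤ s. Then for every k ∈ ℕ, g_k(t) − g_{k−1}(t) = α_{k+r} · t · g_{k+r}(t) in K[[t]]; equivalently, c_0^{(k)} = c_0^{(k−1)} and c_n^{(k)} − c_n^{(k−1)} = α_{k+r} · c_{n−1}^{(k+r)} for all n ≥ 1. (By the Euler–Gauss recurrence method, this identity exhibits the ratios f_k = g_k/g_{k−1} as an r-branched Stieltjes continued fraction with coefficients (α_{k+r})_{k∈ℕ}.) -/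
open Finset Polynomial

/-- The shifted numerator parameters `a_i^{(k)} = a_i + ⌈(k+1−i)/(r+1)⌉`. -/
noncomputable def aShift {K : Type*} [Field K] (r : ℕ) (a : ℕ → K) (k : ℤ) (i : ℕ) : K :=
  a i + ((⌈((k + 1 - (i : ℤ) : ℤ) : ℚ) / ((r : ℚ) + 1)⌉ : ℤ) : K)

/-- The shifted denominator parameters `b_j^{(k)} = b_j + ⌈(k+1−λ_j)/r⌉`. -/
noncomputable def bShift {K : Type*} [Field K] (r : ℕ) (lam : ℕ → ℕ) (b : ℕ → K)
    (k : ℤ) (j : ℕ) : K :=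
  b j + ((⌈((k + 1 - (lam j : ℤ) : ℤ) : ℚ) / (r : ℚ)⌉ : ℤ) : K)

/-- The `n`-th coefficient `c_n^{(k)} = ∏_{i=1}^{r+1} (a_i^{(k)})_n /
(n!·∏_{j=1}^{s} (b_j^{(k)})_n)` of the hypergeometric series
`g_k = r+1F_s(a_1^{(k)},…,a_{r+1}^{(k)}; b_1^{(k)},…,b_s^{(k)}; t)`. -/
noncomputable def hgCoeff {K : Type*} [Field K] (r s : ℕ) (lam : ℕ → ℕ) (a b : ℕ → K)
    (k : ℤ) (n : ℕ) : K :=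
  (∏ i ∈ Finset.Icc 1 (r + 1), (ascPochhammer K n).eval (aShift r a k i)) /
    ((n.factorial : K) *
      ∏ j ∈ Finset.Icc 1 s, (ascPochhammer K n).eval (bShift r lam b k j))

/-- `[k]_n`, the unique element of `{1,…,n}` congruent to `k` modulo `n`. -/
def modIdx (k n : ℕ) : ℕ := ((((k : ℤ) - 1) % (n : ℤ)) + 1).toNat

/-! Going from `g_{k-1}` to `g_k` raises exactly one numerator parameter, `a_{[k]_{r+1}}`, by one,
and raises a denominator parameter `b_ℓ` by one exactly when `[k]_r = λ_ℓ` (there is at most one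
such `ℓ` since the `λ_j` are distinct); going on to `g_{k+r}` raises every parameter of `g_k`
by one, except `a_{[k]_{r+1}}`, which stays as it is. Coefficientwise, the recurrence is then one
of two contiguous relations of hypergeometric coefficients, both verified by splitting off one
factor of each Pochhammer symbol via `(x)_{n+1} = x (x + 1)_n = (x)_n (x + n)`. -/

lemma ascPochhammer_succ_eval_left {S : Type*} [CommSemiring S] (n : ℕ) (x : S) :
    (ascPochhammer S (n + 1)).eval x = x * (ascPochhammer S n).eval (x + 1) := by
  simp [ascPochhammer_succ_left]

lemma ascPochhammer_eval_ne_zero {R : Type*} [CommRing R] [IsDomain R] (n : ℕ) {x : R}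
    (hx : ∀ m : ℕ, x + m ≠ 0) : (ascPochhammer R n).eval x ≠ 0 := by
  rw [Ne, ascPochhammer_eval_eq_zero_iff]
  rintro ⟨m, -, hm⟩
  exact hx m (by rw [hm, add_neg_cancel])

lemma prod_map_ascPochhammer_succ_eval {S : Type*} [CommSemiring S] (A : Multiset S) (n : ℕ) :
    (A.map fun x => (ascPochhammer S (n + 1)).eval x).prod =
      A.prod * ((A.map (· + 1)).map fun x => (ascPochhammer S n).eval x).prod := by
  simp [ascPochhammer_succ_eval_left, Multiset.prod_map_mul, Multiset.map_map]

lemma prod_map_ascPochhammer_eval_ne_zero {R : Type*} [CommRing R] [IsDomain R]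
    {B : Multiset R} (hB : ∀ y ∈ B, ∀ m : ℕ, y + m ≠ 0) (n : ℕ) :
    (B.map fun y => (ascPochhammer R n).eval y).prod ≠ 0 :=
  Multiset.prod_ne_zero fun h => by
    obtain ⟨y, hy, hy0⟩ := Multiset.mem_map.1 h
    exact ascPochhammer_eval_ne_zero n (hB y hy) hy0

lemma PowerSeries.mk_sub_mk_eq_C_mul_X_mul {R : Type*} [CommRing R] {f g h : ℕ → R} {c : R}
    (h₀ : f 0 = g 0) (hsucc : ∀ n, f (n + 1) - g (n + 1) = c * h n) :
    mk f - mk g = C c * X * mk h := by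
  ext (_ | n)
  · simp [h₀]
  · rw [mul_comm (C c), mul_assoc, coeff_succ_X_mul, coeff_C_mul]
    simp [hsucc]

namespace Int

lemma ceil_intCast_div_natCast_eq_iff {m : ℕ} (hm : 0 < m) {x z : ℤ} :
    ⌈(x : ℚ) / m⌉ = z ↔ m * (z - 1) < x ∧ x ≤ m * z := by
  have hm' : (0 : ℚ) < m := by exact_mod_cast hm
  rw [Int.ceil_eq_iff, lt_div_iff₀ hm', div_le_iff₀ hm']
  norm_cast
  constructor <;> rintro ⟨h₁, h₂⟩ <;> constructor <;> linarith

lemma ceil_intCast_add_one_div_natCast {m : ℕ} (hm : 0 < m) (x : ℤ) :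
    ⌈((x + 1 : ℤ) : ℚ) / m⌉ = ⌈(x : ℚ) / m⌉ + if (m : ℤ) ∣ x then 1 else 0 := by
  obtain ⟨h₁, h₂⟩ := (ceil_intCast_div_natCast_eq_iff hm).1 (rfl : ⌈(x : ℚ) / m⌉ = _)
  generalize ⌈(x : ℚ) / m⌉ = c at h₁ h₂ ⊢
  rw [ceil_intCast_div_natCast_eq_iff hm]
  split_ifs with h
  · obtain ⟨d, rfl⟩ := h
    obtain rfl : d = c := by
      have hm' : (0 : ℤ) < m := by exact_mod_cast hm
      nlinarith
    constructor <;> linarith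
  · have : x ≠ m * c := fun e => h ⟨c, e⟩
    rw [mul_sub, mul_one] at h₁
    rw [add_zero, mul_sub, mul_one]
    omega

lemma ceil_intCast_add_natCast_div_natCast {m : ℕ} (hm : 0 < m) (x : ℤ) :
    ⌈((x + m : ℤ) : ℚ) / m⌉ = ⌈(x : ℚ) / m⌉ + 1 := by
  have hm' : (m : ℚ) ≠ 0 := by exact_mod_cast hm.ne'
  rw [← Int.ceil_add_one]
  push_cast
  rw [add_div, div_self hm']

lemma neg_one_le_ceil_intCast_div_natCast {m : ℕ} (hm : 0 < m) {x : ℤ} (hx : -(m : ℤ) ≤ x) :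
    -1 ≤ ⌈(x : ℚ) / m⌉ := by
  rw [Int.le_ceil_iff, lt_div_iff₀ (by exact_mod_cast hm)]
  have : (-(m : ℚ)) ≤ x := by exact_mod_cast hx
  push_cast
  linarith [(by exact_mod_cast hm : (0 : ℚ) < m)]

end Int

lemma modIdx_mem_Icc {n : ℕ} (hn : 0 < n) (k : ℕ) : modIdx k n ∈ Icc 1 n := by
  have h₀ := Int.emod_nonneg ((k : ℤ) - 1) (b := n) (by omega)
  have h₁ := Int.emod_lt_of_pos ((k : ℤ) - 1) (b := n) (by omega)
  simp only [modIdx, mem_Icc]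
  omega

lemma dvd_sub_iff_eq_modIdx {k n i : ℕ} (hi : i ∈ Icc 1 n) :
    (n : ℤ) ∣ k - i ↔ i = modIdx k n := by
  rw [mem_Icc] at hi
  have h₀ := Int.emod_nonneg ((k : ℤ) - 1) (b := n) (by omega)
  have hi' : ((i : ℤ) - 1) % n = i - 1 := Int.emod_eq_of_lt (by omega) (by omega)
  rw [show (k : ℤ) - i = (k - 1) - (i - 1) by ring, ← Int.modEq_iff_dvd, Int.ModEq, hi', modIdx]
  omega

section

variable {K : Type*} [Field K]

noncomputable def hypCoeff (A B : Multiset K) (n : ℕ) : K :=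
  (A.map fun x => (ascPochhammer K n).eval x).prod /
    (n.factorial * (B.map fun y => (ascPochhammer K n).eval y).prod)

lemma hypCoeff_zero (A B : Multiset K) : hypCoeff A B 0 = 1 := by
  simp [hypCoeff]

lemma add_natCast_ne_zero_of_mem_map_add_one {B : Multiset K}
    (hB : ∀ y ∈ B, ∀ m : ℕ, y + (m : K) ≠ 0) : ∀ y ∈ B.map (· + 1), ∀ m : ℕ, y + (m : K) ≠ 0 := by
  simp only [Multiset.mem_map]
  rintro _ ⟨y, hy, rfl⟩ m
  simpa [add_assoc, add_comm (1 : K)] using hB y hy (m + 1)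

section CharZero

variable [CharZero K]

lemma hypCoeff_contiguous_numerator {a : K} {R B : Multiset K}
    (hB : ∀ y ∈ B, ∀ m : ℕ, y + (m : K) ≠ 0) (n : ℕ) :
    hypCoeff ((a + 1) ::ₘ R) B (n + 1) - hypCoeff (a ::ₘ R) B (n + 1) =
      R.prod / B.prod * hypCoeff ((a + 1) ::ₘ R.map (· + 1)) (B.map (· + 1)) n := by
  have hprod : B.prod ≠ 0 := Multiset.prod_ne_zero fun h => by simpa using hB 0 h 0
  have hn : (n : K) + 1 ≠ 0 := by exact_mod_cast n.succ_ne_zero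
  have := prod_map_ascPochhammer_eval_ne_zero (add_natCast_ne_zero_of_mem_map_add_one hB) n
  have := n.factorial_ne_zero
  simp only [hypCoeff, Multiset.map_cons, Multiset.prod_cons, prod_map_ascPochhammer_succ_eval,
    Nat.factorial_succ]
  rw [ascPochhammer_succ_eval, ascPochhammer_succ_eval_left n a]
  field_simp
  push_cast
  ring

lemma hypCoeff_contiguous_numerator_denominator {a b : K} {R S : Multiset K}
    (hbS : ∀ y ∈ b ::ₘ S, ∀ m : ℕ, y + (m : K) ≠ 0) (n : ℕ) :
    hypCoeff ((a + 1) ::ₘ R) ((b + 1) ::ₘ S) (n + 1) - hypCoeff (a ::ₘ R) (b ::ₘ S) (n + 1) =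
      (b - a) * R.prod / (b * ((b + 1) ::ₘ S).prod) *
        hypCoeff ((a + 1) ::ₘ R.map (· + 1)) (((b + 1) ::ₘ S).map (· + 1)) n := by
  have hb : ∀ m : ℕ, b + (m : K) ≠ 0 := hbS b (Multiset.mem_cons_self b S)
  have hS : ∀ y ∈ S, ∀ m : ℕ, y + (m : K) ≠ 0 := fun y hy => hbS y (Multiset.mem_cons_of_mem hy)
  have hb0 : b ≠ 0 := by simpa using hb 0
  have hb1 : b + 1 ≠ 0 := by simpa using hb 1
  have hprod : S.prod ≠ 0 := Multiset.prod_ne_zero fun h => by simpa using hS 0 h 0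
  have hn : (n : K) + 1 ≠ 0 := by exact_mod_cast n.succ_ne_zero
  have := prod_map_ascPochhammer_eval_ne_zero (add_natCast_ne_zero_of_mem_map_add_one hS) n
  have := n.factorial_ne_zero
  have hy := ascPochhammer_eval_ne_zero n (x := b + 1) fun m => by
    simpa [add_assoc, add_comm (1 : K)] using hb (m + 1)
  have hbn : b + 1 + (n : K) ≠ 0 := by simpa [add_assoc, add_comm (1 : K)] using hb (n + 1)
  have hshift : (ascPochhammer K n).eval (b + 1 + 1) =
      (ascPochhammer K n).eval (b + 1) * (b + 1 + n) / (b + 1) := by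
    rw [eq_div_iff hb1, ← ascPochhammer_succ_eval, ascPochhammer_succ_eval_left, mul_comm]
  simp only [hypCoeff, Multiset.map_cons, Multiset.prod_cons, prod_map_ascPochhammer_succ_eval,
    Nat.factorial_succ]
  rw [ascPochhammer_succ_eval n (a + 1), ascPochhammer_succ_eval_left n a,
    ascPochhammer_succ_eval n (b + 1), ascPochhammer_succ_eval_left n b, hshift]
  field_simp
  push_cast
  ring

end CharZero

section Shifts

variable (r : ℕ) (a : ℕ → K) (lam : ℕ → ℕ) (b : ℕ → K)

lemma aShift_natCast {i : ℕ} (hi : i ∈ Icc 1 (r + 1)) (k : ℕ) :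
    aShift r a k i = aShift r a (k - 1) i + if i = modIdx k (r + 1) then 1 else 0 := by
  simp only [← dvd_sub_iff_eq_modIdx hi]
  rw [aShift, aShift, sub_add_cancel,
    show (k : ℤ) + 1 - i = (k - i : ℤ) + 1 by ring, ← Nat.cast_succ,
    Int.ceil_intCast_add_one_div_natCast (by omega)]
  push_cast
  ring

lemma aShift_natCast_modIdx (k : ℕ) :
    aShift r a k (modIdx k (r + 1)) = aShift r a (k - 1) (modIdx k (r + 1)) + 1 := by
  rw [aShift_natCast r a (modIdx_mem_Icc (Nat.succ_pos r) k), if_pos rfl]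

lemma aShift_add_self (k : ℤ) (i : ℕ) : aShift r a (k + r) i = aShift r a (k - 1) i + 1 := by
  rw [aShift, aShift, sub_add_cancel,
    show k + r + 1 - i = (k - i : ℤ) + (r + 1 : ℕ) by push_cast; ring, ← Nat.cast_succ,
    Int.ceil_intCast_add_natCast_div_natCast (by omega)]
  push_cast
  ring

variable {r}

lemma bShift_natCast (hr : 0 < r) {j : ℕ} (hj : lam j ∈ Icc 1 r) (k : ℕ) :
    bShift r lam b k j = bShift r lam b (k - 1) j + if lam j = modIdx k r then 1 else 0 := by
  simp only [← dvd_sub_iff_eq_modIdx hj]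
  rw [bShift, bShift, sub_add_cancel,
    show (k : ℤ) + 1 - lam j = (k - lam j : ℤ) + 1 by ring,
    Int.ceil_intCast_add_one_div_natCast hr]
  push_cast
  ring

lemma bShift_add_self (hr : 0 < r) (k : ℤ) (j : ℕ) :
    bShift r lam b (k + r) j = bShift r lam b k j + 1 := by
  rw [bShift, bShift, show k + r + 1 - lam j = (k + 1 - lam j : ℤ) + r by ring,
    Int.ceil_intCast_add_natCast_div_natCast hr]
  push_cast
  ring

lemma bShift_add_natCast_ne_zero (hr : 0 < r) {j : ℕ} (hj : lam j ≤ r)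
    (hb : ∀ q : ℤ, -1 ≤ q → b j + (q : K) ≠ 0) {k : ℤ} (hk : -1 ≤ k) (m : ℕ) :
    bShift r lam b k j + (m : K) ≠ 0 := by
  have := Int.neg_one_le_ceil_intCast_div_natCast hr (x := k + 1 - lam j) (by omega)
  rw [bShift, add_assoc]
  exact_mod_cast hb (⌈((k + 1 - lam j : ℤ) : ℚ) / r⌉ + m) (by omega)

end Shifts

lemma Finset.val_map_eq_cons_map_erase {α β : Type*} [DecidableEq α] {s : Finset α} {i : α}
    (hi : i ∈ s) {f g : α → β} (hfg : ∀ j ∈ s.erase i, f j = g j) :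
    s.val.map f = f i ::ₘ (s.erase i).val.map g := by
  rw [← Multiset.map_congr rfl hfg, Finset.erase_val, ← Multiset.map_cons,
    Multiset.cons_erase hi]

section Params

variable (r s : ℕ) (a : ℕ → K) (lam : ℕ → ℕ) (b : ℕ → K)

noncomputable def aParams (k : ℤ) : Multiset K := (Icc 1 (r + 1)).val.map (aShift r a k)

noncomputable def bParams (k : ℤ) : Multiset K := (Icc 1 s).val.map (bShift r lam b k)

lemma hgCoeff_eq_hypCoeff (k : ℤ) :
    hgCoeff r s lam a b k = hypCoeff (aParams r a k) (bParams r s lam b k) := by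
  ext n
  simp only [hgCoeff, hypCoeff, aParams, bParams, Multiset.map_map, Function.comp_def,
    Finset.prod_eq_multiset_prod]

noncomputable def aRest (k : ℕ) : Multiset K :=
  ((Icc 1 (r + 1)).erase (modIdx k (r + 1))).val.map (aShift r a k)

lemma aParams_natCast_sub_one (k : ℕ) :
    aParams r a (k - 1) = aShift r a (k - 1) (modIdx k (r + 1)) ::ₘ aRest r a k :=
  Finset.val_map_eq_cons_map_erase (modIdx_mem_Icc (Nat.succ_pos r) k) fun i hi => by
    rw [aShift_natCast r a (mem_of_mem_erase hi), if_neg (ne_of_mem_erase hi), add_zero]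

lemma aParams_natCast (k : ℕ) :
    aParams r a k = (aShift r a (k - 1) (modIdx k (r + 1)) + 1) ::ₘ aRest r a k := by
  rw [aParams, Finset.val_map_eq_cons_map_erase (modIdx_mem_Icc (Nat.succ_pos r) k) fun _ _ => rfl,
    aShift_natCast_modIdx, aRest]

lemma aParams_natCast_add (k : ℕ) :
    aParams r a (k + r) =
      (aShift r a (k - 1) (modIdx k (r + 1)) + 1) ::ₘ (aRest r a k).map (· + 1) := by
  rw [aParams, aRest, Multiset.map_map, ← aShift_add_self]
  refine Finset.val_map_eq_cons_map_erase (modIdx_mem_Icc (Nat.succ_pos r) k) fun i hi => ?_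
  rw [Function.comp_apply, aShift_add_self, aShift_natCast r a (mem_of_mem_erase hi),
    if_neg (ne_of_mem_erase hi), add_zero]

variable {r s lam}

lemma bParams_add_self (hr : 0 < r) (k : ℤ) :
    bParams r s lam b (k + r) = (bParams r s lam b k).map (· + 1) := by
  simp only [bParams, Multiset.map_map, Function.comp_def, bShift_add_self lam b hr]

lemma bParams_add_natCast_ne_zero (hr : 0 < r) (hlam : ∀ j ∈ Icc 1 s, lam j ≤ r)
    (hb : ∀ j ∈ Icc 1 s, ∀ q : ℤ, -1 ≤ q → b j + (q : K) ≠ 0) {k : ℤ} (hk : -1 ≤ k) :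
    ∀ y ∈ bParams r s lam b k, ∀ m : ℕ, y + (m : K) ≠ 0 := by
  simp only [bParams, Multiset.mem_map, Finset.mem_val]
  rintro _ ⟨j, hj, rfl⟩
  exact bShift_add_natCast_ne_zero lam b hr (hlam j hj) (hb j hj) hk

lemma bParams_natCast_sub_one_of_forall_ne (hr : 0 < r)
    (hlam : ∀ j ∈ Icc 1 s, lam j ∈ Icc 1 r) {k : ℕ} (hk : ∀ j ∈ Icc 1 s, lam j ≠ modIdx k r) :
    bParams r s lam b (k - 1) = bParams r s lam b k :=
  Multiset.map_congr rfl fun j hj => by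
    rw [bShift_natCast lam b hr (hlam j hj), if_neg (hk j hj), add_zero]

lemma bParams_natCast_sub_one_of_eq (hr : 0 < r) (hlam : ∀ j ∈ Icc 1 s, lam j ∈ Icc 1 r)
    (hinj : Set.InjOn lam (Icc 1 s)) {k ℓ : ℕ} (hℓ : ℓ ∈ Icc 1 s) (hk : lam ℓ = modIdx k r) :
    bParams r s lam b (k - 1) =
      bShift r lam b (k - 1) ℓ ::ₘ ((Icc 1 s).erase ℓ).val.map (bShift r lam b k) :=
  Finset.val_map_eq_cons_map_erase hℓ fun j hj => by
    obtain ⟨hjℓ, hj⟩ := mem_erase.1 hj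
    rw [bShift_natCast lam b hr (hlam j hj), if_neg fun h => hjℓ (hinj hj hℓ (h.trans hk.symm)),
      add_zero]

lemma bParams_natCast_of_eq (hr : 0 < r) (hlam : ∀ j ∈ Icc 1 s, lam j ∈ Icc 1 r) {k ℓ : ℕ}
    (hℓ : ℓ ∈ Icc 1 s) (hk : lam ℓ = modIdx k r) :
    bParams r s lam b k =
      (bShift r lam b (k - 1) ℓ + 1) ::ₘ ((Icc 1 s).erase ℓ).val.map (bShift r lam b k) := by
  rw [bParams, Finset.val_map_eq_cons_map_erase hℓ fun _ _ => rfl,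
    bShift_natCast lam b hr (hlam ℓ hℓ), if_pos hk]

end Params

end

theorem stmt8_general {K : Type*} [Field K] [CharZero K]
    (r s : ℕ) (hr : 1 ≤ r)
    (lam : ℕ → ℕ)
    (hlam1 : ∀ j, 1 ≤ j → j ≤ s → 1 ≤ lam j ∧ lam j ≤ r)
    (hlam2 : ∀ j j', 1 ≤ j → j < j' → j' ≤ s → lam j < lam j')
    (a b : ℕ → K)
    (hb : ∀ j, 1 ≤ j → j ≤ s → ∀ q : ℤ, -1 ≤ q → b j + (q : K) ≠ 0)
    (α : ℕ → K)
    (hα1 : ∀ k : ℕ, (∀ ℓ, 1 ≤ ℓ → ℓ ≤ s → modIdx k r ≠ lam ℓ) →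
      α (k + r) =
        (∏ i ∈ (Finset.Icc 1 (r + 1)).erase (modIdx k (r + 1)), aShift r a (k : ℤ) i) /
          ∏ j ∈ Finset.Icc 1 s, bShift r lam b (k : ℤ) j)
    (hα2 : ∀ k ℓ, 1 ≤ ℓ → ℓ ≤ s → modIdx k r = lam ℓ →
      α (k + r) =
        ((bShift r lam b (k : ℤ) ℓ - aShift r a (k : ℤ) (modIdx k (r + 1))) *
            ∏ i ∈ (Finset.Icc 1 (r + 1)).erase (modIdx k (r + 1)), aShift r a (k : ℤ) i) /
          ((bShift r lam b (k : ℤ) ℓ - 1) *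
            ∏ j ∈ Finset.Icc 1 s, bShift r lam b (k : ℤ) j)) :
    ∀ k : ℕ,
      PowerSeries.mk (hgCoeff r s lam a b (k : ℤ))
          - PowerSeries.mk (hgCoeff r s lam a b ((k : ℤ) - 1))
        = PowerSeries.C (R := K) (α (k + r)) * PowerSeries.X *
            PowerSeries.mk (hgCoeff r s lam a b ((k : ℤ) + r)) := by
  intro k
  have hr₀ : 0 < r := hr
  have hlam : ∀ j ∈ Icc 1 s, lam j ∈ Icc 1 r := fun j hj =>
    mem_Icc.2 (hlam1 j (mem_Icc.1 hj).1 (mem_Icc.1 hj).2)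
  have hinj : Set.InjOn lam (Icc 1 s) := StrictMonoOn.injOn fun j hj j' hj' hjj' =>
    hlam2 j j' (mem_Icc.1 hj).1 hjj' (mem_Icc.1 hj').2
  have hbne (k' : ℤ) (hk' : -1 ≤ k') :=
    bParams_add_natCast_ne_zero b hr₀ (fun j hj => (mem_Icc.1 (hlam j hj)).2)
      (fun j hj => hb j (mem_Icc.1 hj).1 (mem_Icc.1 hj).2) hk'
  simp only [hgCoeff_eq_hypCoeff]
  refine PowerSeries.mk_sub_mk_eq_C_mul_X_mul (by rw [hypCoeff_zero, hypCoeff_zero]) fun n => ?_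
  rw [aParams_natCast_sub_one, aParams_natCast, aParams_natCast_add, bParams_add_self b hr₀]
  by_cases hjump : ∃ ℓ ∈ Icc 1 s, lam ℓ = modIdx k r
  · obtain ⟨ℓ, hℓ, hkℓ⟩ := hjump
    have hα : α (k + r) = (bShift r lam b (k - 1) ℓ - aShift r a (k - 1) (modIdx k (r + 1))) *
        (aRest r a k).prod / (bShift r lam b (k - 1) ℓ * (bParams r s lam b k).prod) := by
      rw [hα2 k ℓ (mem_Icc.1 hℓ).1 (mem_Icc.1 hℓ).2 hkℓ.symm,
        bShift_natCast lam b hr₀ (hlam ℓ hℓ), if_pos hkℓ, aShift_natCast_modIdx,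
        add_sub_add_right_eq_sub, add_sub_cancel_right]
      rfl
    have hprev := bParams_natCast_sub_one_of_eq b hr₀ hlam hinj hℓ hkℓ
    rw [hα, hprev, bParams_natCast_of_eq b hr₀ hlam hℓ hkℓ,
      hypCoeff_contiguous_numerator_denominator (hprev ▸ hbne (k - 1) (by omega))]
  · simp only [not_exists, not_and] at hjump
    rw [bParams_natCast_sub_one_of_forall_ne b hr₀ hlam hjump,
      hypCoeff_contiguous_numerator (hbne k (by omega)),
      hα1 k fun ℓ h₁ h₂ h => hjump ℓ (mem_Icc.2 ⟨h₁, h₂⟩) h.symm]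
    rfl

/-- The Euler–Gauss recurrence `g_k − g_{k−1} = α_{k+r}·t·g_{k+r}` for the contiguous
hypergeometric series `g_k` (case `r ≥ s`), exhibiting the ratios `f_k = g_k/g_{k−1}` as an
`r`-branched Stieltjes continued fraction with coefficients `(α_{k+r})_{k∈ℕ}`. -/
theorem stmt8 {K : Type*} [Field K] [CharZero K]
    (r s : ℕ) (hr : 1 ≤ r) (hs : s ≤ r)
    (lam : ℕ → ℕ)
    (hlam1 : ∀ j, 1 ≤ j → j ≤ s → 1 ≤ lam j ∧ lam j ≤ r)
    (hlam2 : ∀ j j', 1 ≤ j → j < j' → j' ≤ s → lam j < lam j')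
    (a b : ℕ → K)
    (hb : ∀ j, 1 ≤ j → j ≤ s → ∀ q : ℤ, -1 ≤ q → b j + (q : K) ≠ 0)
    (α : ℕ → K)
    (hα1 : ∀ k : ℕ, (∀ ℓ, 1 ≤ ℓ → ℓ ≤ s → modIdx k r ≠ lam ℓ) →
      α (k + r) =
        (∏ i ∈ (Finset.Icc 1 (r + 1)).erase (modIdx k (r + 1)), aShift r a (k : ℤ) i) /
          ∏ j ∈ Finset.Icc 1 s, bShift r lam b (k : ℤ) j)
    (hα2 : ∀ k ℓ, 1 ≤ ℓ → ℓ ≤ s → modIdx k r = lam ℓ →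
      α (k + r) =
        ((bShift r lam b (k : ℤ) ℓ - aShift r a (k : ℤ) (modIdx k (r + 1))) *
            ∏ i ∈ (Finset.Icc 1 (r + 1)).erase (modIdx k (r + 1)), aShift r a (k : ℤ) i) /
          ((bShift r lam b (k : ℤ) ℓ - 1) *
            ∏ j ∈ Finset.Icc 1 s, bShift r lam b (k : ℤ) j)) :
    ∀ k : ℕ,
      PowerSeries.mk (hgCoeff r s lam a b (k : ℤ))
          - PowerSeries.mk (hgCoeff r s lam a b ((k : ℤ) - 1))
        = PowerSeries.C (R := K) (α (k + r)) * PowerSeries.X *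
            PowerSeries.mk (hgCoeff r s lam a b ((k : ℤ) + r)) :=
  stmt8_general r s hr lam hlam1 hlam2 a b hb α hα1 hα2
end

section
/- Let 0 ≤ r ≤ s with s ≥ 1, let 1 ≤ σ_1 < ⋯ < σ_r ≤ s be integers and set σ_{r+1} = s+1 and Σ = {σ_1,…,σ_r, s+1}. Let K be a field of characteristic zero and a_1, …, a_{r+1}, b_1, …, b_s ∈ K with b_j + q ≠ 0 in K for every integer q ≥ −1 and every 1 ≤ j ≤ s. For k ≥ −1 set a_i^{(k)} = a_i + ⌈(k+1−σ_i)/(s+1)⌉ for 1 ≤ i ≤ r+1 and b_j^{(k)} = b_j + ⌈(k+1−j)/s⌉ for 1 ≤ j ≤ s, and let g_k ∈ K[[t]] be the formal power series with n-th coefficient c_n^{(k)} = ∏_{i=1}^{r+1} (a_i^{(k)})_n / ( n! · ∏_{j=1}^{s} (b_j^{(k)})_n ). For k ∈ ℕ define α_{k+s} ∈ K by: α_{k+s} = − ∏_{i=1}^{r+1} a_i^{(k)} / ( (b_{[k]_s}^{(k)} − 1) · ∏_{j=1}^{s} b_j^{(k)} ) if [k]_{s+1} ∉ Σ; and α_{k+s}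 = (b_{[k]_s}^{(k)} − a_ℓ^{(k)}) · ∏_{1≤i≤r+1, i≠ℓ} a_i^{(k)} / ( (b_{[k]_s}^{(k)} − 1) · ∏_{j=1}^{s} b_j^{(k)} ) if [k]_{s+1} = σ_ℓ for some 1 ≤ ℓ ≤ r+1. Then for every k ∈ ℕ, g_k(t) − g_{k−1}(t) = α_{k+s} · t · g_{k+s}(t) in K[[t]]; equivalently, c_0^{(k)} = c_0^{(k−1)} and c_n^{(k)} − c_n^{(k−1)} = α_{k+s} · c_{n−1}^{(k+s)} for all n ≥ 1. -/
open Finset Polynomial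

/-- The shifted numerator parameters `a_i^{(k)} = a_i + ⌈(k+1−σ_i)/(s+1)⌉` (case `r ≤ s`). -/
noncomputable def aShift' {K : Type*} [Field K] (s : ℕ) (sig : ℕ → ℕ) (a : ℕ → K)
    (k : ℤ) (i : ℕ) : K :=
  a i + ((⌈((k + 1 - (sig i : ℤ) : ℤ) : ℚ) / ((s : ℚ) + 1)⌉ : ℤ) : K)

/-- The shifted denominator parameters `b_j^{(k)} = b_j + ⌈(k+1−j)/s⌉` (case `r ≤ s`). -/
noncomputable def bShift' {K : Type*} [Field K] (s : ℕ) (b : ℕ → K) (k : ℤ) (j : ℕ) : K :=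
  b j + ((⌈((k + 1 - (j : ℤ) : ℤ) : ℚ) / (s : ℚ)⌉ : ℤ) : K)

/-- The `n`-th coefficient `c_n^{(k)} = ∏_{i=1}^{r+1} (a_i^{(k)})_n /
(n!·∏_{j=1}^{s} (b_j^{(k)})_n)` of the hypergeometric series `g_k`. -/
noncomputable def hgCoeff' {K : Type*} [Field K] (r s : ℕ) (sig : ℕ → ℕ) (a b : ℕ → K)
    (k : ℤ) (n : ℕ) : K :=
  (∏ i ∈ Finset.Icc 1 (r + 1), (ascPochhammer K n).eval (aShift' s sig a k i)) /
    ((n.factorial : K) *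
      ∏ j ∈ Finset.Icc 1 s, (ascPochhammer K n).eval (bShift' s b k j))

/-!
Each `g_k` is a hypergeometric series with numerator parameters `a_i^{(k)}` and denominator
parameters `b_j^{(k)}`. Passing from `k - 1` to `k` raises exactly one denominator parameter,
`b_{[k]_s}`, by one, and raises the numerator parameter `a_ℓ` exactly when `σ_ℓ ≡ k (mod s+1)`
(for at most one `ℓ`, the `σ_i` being distinct); passing from `k - 1` to `k + s` raises every
parameter by one. The recurrence is therefore a contiguity relation between single coefficients:
`c_{n+1}(A, B) = ∏ A / ((n+1) ∏ B) · c_n(A + 1, B + 1)`, and lowering one denominator parameter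
`B₀` by one multiplies `c_{n+1}` by `(B₀ + n) / (B₀ - 1)`.
-/

lemma ascPochhammer_eval_succ_left {K : Type*} [CommSemiring K] (x : K) (n : ℕ) :
    (ascPochhammer K (n + 1)).eval x = x * (ascPochhammer K n).eval (x + 1) := by
  simp [ascPochhammer_succ_left, eval_comp]

lemma prod_ascPochhammer_eval_succ {ι K : Type*} [CommSemiring K] (I : Finset ι) (A : ι → K)
    (n : ℕ) :
    ∏ i ∈ I, (ascPochhammer K (n + 1)).eval (A i) =
      (∏ i ∈ I, A i) * ∏ i ∈ I, (ascPochhammer K n).eval (A i + 1) := by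
  simp only [ascPochhammer_eval_succ_left, prod_mul_distrib]

section HypergeometricTerm

variable {ι K : Type*} [Field K] (I J : Finset ι)

noncomputable def hgTerm (A B : ι → K) (n : ℕ) : K :=
  (∏ i ∈ I, (ascPochhammer K n).eval (A i)) /
    (n.factorial * ∏ j ∈ J, (ascPochhammer K n).eval (B j))

variable {I J} {A A' B B' : ι → K}

lemma hgTerm_congr_num (hA : ∀ i ∈ I, A' i = A i) (B : ι → K) (n : ℕ) :
    hgTerm I J A' B n = hgTerm I J A B n := by
  rw [hgTerm, hgTerm, prod_congr rfl fun i hi ↦ by rw [hA i hi]]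

lemma hgTerm_succ (A B : ι → K) (n : ℕ) :
    hgTerm I J A B (n + 1) =
      (∏ i ∈ I, A i) / ((n + 1) * ∏ j ∈ J, B j) * hgTerm I J (A · + 1) (B · + 1) n := by
  simp only [hgTerm, prod_ascPochhammer_eval_succ, Nat.factorial_succ, Nat.cast_mul,
    Nat.cast_succ]
  rw [div_mul_div_comm]
  ring

variable [DecidableEq ι] {ℓ j₀ : ι}

/-- Stated through `A'` so that the contiguity relation never divides by `A ℓ + n`,
which may vanish. -/
lemma hgTerm_succ_of_lower_num (hℓ : ℓ ∈ I) (hAℓ : A' ℓ = A ℓ - 1)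
    (hA : ∀ i ∈ I.erase ℓ, A' i = A i) (B : ι → K) (n : ℕ) :
    hgTerm I J A B (n + 1) =
      (A ℓ + n) * (∏ i ∈ I.erase ℓ, A i) / ((n + 1) * ∏ j ∈ J, B j) *
        hgTerm I J (A' · + 1) (B · + 1) n := by
  have hnum : ∏ i ∈ I, (ascPochhammer K (n + 1)).eval (A i) =
      (A ℓ + n) * (∏ i ∈ I.erase ℓ, A i) * ∏ i ∈ I, (ascPochhammer K n).eval (A' i + 1) := by
    have hrest : ∏ i ∈ I.erase ℓ, (ascPochhammer K n).eval (A' i + 1) =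
        ∏ i ∈ I.erase ℓ, (ascPochhammer K n).eval (A i + 1) :=
      prod_congr rfl fun i hi ↦ by rw [hA i hi]
    rw [← mul_prod_erase I _ hℓ, ← mul_prod_erase I _ hℓ, hrest, prod_ascPochhammer_eval_succ,
      hAℓ, sub_add_cancel, ascPochhammer_succ_eval]
    ring
  simp only [hgTerm, hnum, prod_ascPochhammer_eval_succ, Nat.factorial_succ, Nat.cast_mul,
    Nat.cast_succ]
  rw [div_mul_div_comm]
  ring

lemma hgTerm_succ_of_lower_den (hj₀ : j₀ ∈ J) (hB₀ : B' j₀ = B j₀ - 1)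
    (hB : ∀ j ∈ J.erase j₀, B' j = B j) (A : ι → K) {n : ℕ} (hn : B j₀ + n ≠ 0) :
    hgTerm I J A B' (n + 1) = (B j₀ + n) / (B j₀ - 1) * hgTerm I J A B (n + 1) := by
  set R := ∏ j ∈ J.erase j₀, (ascPochhammer K (n + 1)).eval (B j)
  have hB'prod : ∏ j ∈ J, (ascPochhammer K (n + 1)).eval (B' j) =
      (B j₀ - 1) * (ascPochhammer K n).eval (B j₀) * R := by
    rw [← mul_prod_erase J _ hj₀, prod_congr rfl fun j hj ↦ by rw [hB j hj], hB₀,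
      ascPochhammer_eval_succ_left, sub_add_cancel]
  have hBprod : ∏ j ∈ J, (ascPochhammer K (n + 1)).eval (B j) =
      (B j₀ + n) * (ascPochhammer K n).eval (B j₀) * R := by
    rw [← mul_prod_erase J _ hj₀, ascPochhammer_succ_eval, mul_comm (B j₀ + n)]
  rw [hgTerm, hgTerm, hB'prod, hBprod, div_mul_div_comm, ← mul_div_mul_left _ _ hn]
  ring

variable [CharZero K]

theorem hgTerm_succ_sub_of_lower_den (hj₀ : j₀ ∈ J) (hB₀ : B' j₀ = B j₀ - 1)
    (hB : ∀ j ∈ J.erase j₀, B' j = B j) (hA : ∀ i ∈ I, A' i = A i) {n : ℕ}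
    (hn : B j₀ + n ≠ 0) (h₀ : B j₀ - 1 ≠ 0) :
    hgTerm I J A B (n + 1) - hgTerm I J A' B' (n + 1) =
      -(∏ i ∈ I, A i) / ((B j₀ - 1) * ∏ j ∈ J, B j) * hgTerm I J (A · + 1) (B · + 1) n := by
  rw [hgTerm_succ_of_lower_den hj₀ hB₀ hB A' hn, hgTerm_congr_num hA, hgTerm_succ]
  have : (n + 1 : K) ≠ 0 := by exact_mod_cast n.succ_ne_zero
  field_simp
  ring

theorem hgTerm_succ_sub_of_lower_num_den (hℓ : ℓ ∈ I) (hAℓ : A' ℓ = A ℓ - 1)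
    (hA : ∀ i ∈ I.erase ℓ, A' i = A i) (hj₀ : j₀ ∈ J) (hB₀ : B' j₀ = B j₀ - 1)
    (hB : ∀ j ∈ J.erase j₀, B' j = B j) {n : ℕ} (hn : B j₀ + n ≠ 0) (h₀ : B j₀ - 1 ≠ 0) :
    hgTerm I J A B (n + 1) - hgTerm I J A' B' (n + 1) =
      (B j₀ - A ℓ) * (∏ i ∈ I.erase ℓ, A i) / ((B j₀ - 1) * ∏ j ∈ J, B j) *
        hgTerm I J (A' · + 1) (B · + 1) n := by
  rw [hgTerm_succ_of_lower_den hj₀ hB₀ hB A' hn, hgTerm_succ_of_lower_num hℓ hAℓ hA,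
    hgTerm_succ A', ← mul_prod_erase I _ hℓ, hAℓ, prod_congr rfl hA]
  have : (n + 1 : K) ≠ 0 := by exact_mod_cast n.succ_ne_zero
  field_simp
  ring

end HypergeometricTerm

lemma ceil_intCast_add_one_div (p : ℤ) {d : ℕ} (hd : 0 < d) :
    ⌈((p + 1 : ℤ) : ℚ) / d⌉ = ⌈(p : ℚ) / d⌉ + if (d : ℤ) ∣ p then 1 else 0 := by
  rw [Rat.ceil_intCast_div_natCast, Rat.ceil_intCast_div_natCast, neg_add, ← sub_eq_add_neg]
  have hd' : (0 : ℤ) < d := by exact_mod_cast hd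
  have hdiv := Int.emod_add_mul_ediv (-p) d
  have hlt := Int.emod_lt_of_pos (-p) hd'
  have hq : (-p - 1) / d = (-p) / d - if (d : ℤ) ∣ p then 1 else 0 := by
    split_ifs with h
    · rw [Int.emod_eq_zero_of_dvd (dvd_neg.mpr h)] at hdiv
      exact ((Int.ediv_emod_unique (r := d - 1) hd').mpr
        ⟨by linear_combination hdiv, by omega, by omega⟩).1
    · have hne : (-p) % d ≠ 0 := fun h0 ↦ h (dvd_neg.mp (Int.dvd_of_emod_eq_zero h0))
      have h0 := Int.emod_nonneg (-p) hd'.ne'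
      exact ((Int.ediv_emod_unique (r := (-p) % d - 1) hd').mpr
        ⟨by linear_combination hdiv, by omega, by omega⟩).1
  rw [hq]
  ring

lemma ceil_intCast_add_natCast_div (p : ℤ) {d : ℕ} (hd : 0 < d) :
    ⌈((p + d : ℤ) : ℚ) / d⌉ = ⌈(p : ℚ) / d⌉ + 1 := by
  rw [Int.cast_add, Int.cast_natCast, add_div, div_self (by positivity), Int.ceil_add_one]

lemma modIdx_mem (k : ℕ) {m : ℕ} (hm : 0 < m) : modIdx k m ∈ Icc 1 m := by
  have h0 := Int.emod_nonneg ((k : ℤ) - 1) (by omega : (m : ℤ) ≠ 0)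
  have hlt := Int.emod_lt_of_pos ((k : ℤ) - 1) (by omega : (0 : ℤ) < m)
  rw [mem_Icc, modIdx]
  omega

lemma modIdx_eq_iff {k m v : ℕ} (hv : v ∈ Icc 1 m) : modIdx k m = v ↔ (m : ℤ) ∣ k - v := by
  obtain ⟨hv1, hvm⟩ := mem_Icc.mp hv
  have hm : (0 : ℤ) < m := by omega
  have h0 := Int.emod_nonneg ((k : ℤ) - 1) hm.ne'
  have hlt := Int.emod_lt_of_pos ((k : ℤ) - 1) hm
  have hv' : ((v : ℤ) - 1) % m = v - 1 := Int.emod_eq_of_lt (by omega) (by omega)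
  rw [modIdx, show (k : ℤ) - v = (k - 1) - (v - 1) by ring, dvd_sub_comm, ← Int.modEq_iff_dvd,
    Int.ModEq, hv']
  omega

section Shifts

variable {K : Type*} [Field K] {s : ℕ}

lemma aShift'_sub_one (sig : ℕ → ℕ) (a : ℕ → K) (k : ℤ) (i : ℕ) :
    aShift' s sig a (k - 1) i =
      aShift' s sig a k i - if ((s + 1 : ℕ) : ℤ) ∣ k - sig i then 1 else 0 := by
  have h := ceil_intCast_add_one_div (k - sig i) s.succ_pos
  rw [show k - sig i + 1 = k + 1 - sig i by ring] at h
  simp only [aShift', ← Nat.cast_succ, h, show k - 1 + 1 - sig i = k - sig i by ring]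
  push_cast
  ring

lemma aShift'_add_self (sig : ℕ → ℕ) (a : ℕ → K) (k : ℤ) (i : ℕ) :
    aShift' s sig a (k + s) i = aShift' s sig a (k - 1) i + 1 := by
  have h := ceil_intCast_add_natCast_div (k - 1 + 1 - sig i) s.succ_pos
  rw [show k - 1 + 1 - sig i + (s + 1 : ℕ) = k + s + 1 - sig i by push_cast; ring] at h
  simp only [aShift', ← Nat.cast_succ, h]
  push_cast
  ring

lemma bShift'_sub_one (hs : 0 < s) (b : ℕ → K) (k : ℤ) (j : ℕ) :
    bShift' s b (k - 1) j = bShift' s b k j - if (s : ℤ) ∣ k - j then 1 else 0 := by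
  have h := ceil_intCast_add_one_div (k - j) hs
  rw [show k - j + 1 = k + 1 - j by ring] at h
  simp only [bShift', h, show k - 1 + 1 - j = k - j by ring]
  push_cast
  ring

lemma bShift'_add_self (hs : 0 < s) (b : ℕ → K) (k : ℤ) (j : ℕ) :
    bShift' s b (k + s) j = bShift' s b k j + 1 := by
  have h := ceil_intCast_add_natCast_div (k + 1 - j) hs
  rw [show k + 1 - j + s = k + s + 1 - j by ring] at h
  simp only [bShift', h]
  push_cast
  ring

lemma bShift'_modIdx_sub_one (hs : 0 < s) (b : ℕ → K) (k : ℕ) :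
    bShift' s b (k - 1) (modIdx k s) = bShift' s b k (modIdx k s) - 1 := by
  rw [bShift'_sub_one hs, if_pos ((modIdx_eq_iff (modIdx_mem k hs)).mp rfl)]

lemma bShift'_sub_one_of_ne_modIdx (hs : 0 < s) (b : ℕ → K) {k j : ℕ}
    (hj : j ∈ (Icc 1 s).erase (modIdx k s)) : bShift' s b (k - 1) j = bShift' s b k j := by
  obtain ⟨hne, hjI⟩ := mem_erase.mp hj
  rw [bShift'_sub_one hs, if_neg fun h ↦ hne ((modIdx_eq_iff hjI).mpr h).symm, sub_zero]

lemma bShift'_add_natCast_ne_zero {b : ℕ → K}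
    (hb : ∀ j, 1 ≤ j → j ≤ s → ∀ q : ℤ, -1 ≤ q → b j + (q : K) ≠ 0) {k : ℤ} (hk : -1 ≤ k)
    {j : ℕ} (hj : j ∈ Icc 1 s) (t : ℕ) :
    bShift' s b k j + t ≠ 0 := by
  obtain ⟨hj1, hjs⟩ := mem_Icc.mp hj
  have hs : (0 : ℚ) < s := by exact_mod_cast hj1.trans hjs
  have hc : -1 ≤ ⌈((k + 1 - j : ℤ) : ℚ) / s⌉ := by
    refine Int.le_ceil_iff.mpr ((lt_div_iff₀ hs).mpr ?_)
    have : (-2 : ℤ) * s < k + 1 - j := by omega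
    exact_mod_cast this
  have h := hb j hj1 hjs (_ + t) (by omega : -1 ≤ ⌈((k + 1 - j : ℤ) : ℚ) / s⌉ + t)
  rw [bShift', add_assoc]
  exact_mod_cast h

lemma bShift'_modIdx_sub_one_ne_zero (hs : 0 < s) {b : ℕ → K}
    (hb : ∀ j, 1 ≤ j → j ≤ s → ∀ q : ℤ, -1 ≤ q → b j + (q : K) ≠ 0) (k : ℕ) :
    bShift' s b k (modIdx k s) - 1 ≠ 0 := by
  simpa [bShift'_modIdx_sub_one hs b k] using
    bShift'_add_natCast_ne_zero hb (k := k - 1) (by omega) (modIdx_mem k hs) 0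

end Shifts

section Nodes

variable {r s : ℕ} {sig : ℕ → ℕ}

lemma sig_mem_Icc_succ (hsig1 : ∀ i, 1 ≤ i → i ≤ r → 1 ≤ sig i ∧ sig i ≤ s)
    (hsig3 : sig (r + 1) = s + 1) {i : ℕ} (hi : i ∈ Icc 1 (r + 1)) : sig i ∈ Icc 1 (s + 1) := by
  obtain ⟨hi1, hir⟩ := mem_Icc.mp hi
  rcases hir.lt_or_eq with hir | rfl
  · have := hsig1 i hi1 (by omega)
    exact mem_Icc.mpr ⟨this.1, by omega⟩
  · simp [hsig3]

lemma strictMonoOn_sig_Icc_succ (hsig1 : ∀ i, 1 ≤ i → i ≤ r → 1 ≤ sig i ∧ sig i ≤ s)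
    (hsig2 : ∀ i i', 1 ≤ i → i < i' → i' ≤ r → sig i < sig i')
    (hsig3 : sig (r + 1) = s + 1) : StrictMonoOn sig (Icc 1 (r + 1) : Set ℕ) := by
  intro i hi i' hi' hii'
  simp only [coe_Icc, Set.mem_Icc] at hi hi'
  rcases hi'.2.lt_or_eq with hi'r | rfl
  · exact hsig2 i i' hi.1 hii' (by omega)
  · have := hsig1 i hi.1 (by omega)
    omega

end Nodes

section Coefficients

variable {K : Type*} [Field K] {r s : ℕ} {sig : ℕ → ℕ} {a b : ℕ → K}

lemma hgCoeff'_eq_hgTerm (k : ℤ) :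
    hgCoeff' r s sig a b k =
      hgTerm (Icc 1 (r + 1)) (Icc 1 s) (aShift' s sig a k) (bShift' s b k) :=
  rfl

lemma hgCoeff'_add_self (hs : 0 < s) (k : ℤ) :
    hgCoeff' r s sig a b (k + s) =
      hgTerm (Icc 1 (r + 1)) (Icc 1 s) (aShift' s sig a (k - 1) · + 1) (bShift' s b k · + 1) := by
  rw [hgCoeff'_eq_hgTerm, funext (aShift'_add_self sig a k), funext (bShift'_add_self hs b k)]

variable [CharZero K]

theorem hgCoeff'_succ_sub_of_aShift'_eq (hs : 0 < s)
    (hb : ∀ j, 1 ≤ j → j ≤ s → ∀ q : ℤ, -1 ≤ q → b j + (q : K) ≠ 0) (k n : ℕ)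
    (hA : ∀ i ∈ Icc 1 (r + 1), aShift' s sig a (k - 1) i = aShift' s sig a k i) :
    hgCoeff' r s sig a b k (n + 1) - hgCoeff' r s sig a b (k - 1) (n + 1) =
      -(∏ i ∈ Icc 1 (r + 1), aShift' s sig a k i) /
          ((bShift' s b k (modIdx k s) - 1) * ∏ j ∈ Icc 1 s, bShift' s b k j) *
        hgCoeff' r s sig a b (k + s) n := by
  have hj₀ := modIdx_mem k hs
  rw [hgCoeff'_add_self hs, hgCoeff'_eq_hgTerm, hgCoeff'_eq_hgTerm,
    hgTerm_congr_num (A' := (aShift' s sig a (k - 1) · + 1)) fun i hi ↦ by rw [hA i hi]]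
  exact hgTerm_succ_sub_of_lower_den hj₀ (bShift'_modIdx_sub_one hs b k)
    (fun j hj ↦ bShift'_sub_one_of_ne_modIdx hs b hj) hA
    (bShift'_add_natCast_ne_zero hb (by omega) hj₀ n) (bShift'_modIdx_sub_one_ne_zero hs hb k)

theorem hgCoeff'_succ_sub_of_aShift'_lower (hs : 0 < s)
    (hb : ∀ j, 1 ≤ j → j ≤ s → ∀ q : ℤ, -1 ≤ q → b j + (q : K) ≠ 0) (k n : ℕ) {ℓ : ℕ}
    (hℓ : ℓ ∈ Icc 1 (r + 1)) (hAℓ : aShift' s sig a (k - 1) ℓ = aShift' s sig a k ℓ - 1)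
    (hA : ∀ i ∈ (Icc 1 (r + 1)).erase ℓ, aShift' s sig a (k - 1) i = aShift' s sig a k i) :
    hgCoeff' r s sig a b k (n + 1) - hgCoeff' r s sig a b (k - 1) (n + 1) =
      (bShift' s b k (modIdx k s) - aShift' s sig a k ℓ) *
            (∏ i ∈ (Icc 1 (r + 1)).erase ℓ, aShift' s sig a k i) /
          ((bShift' s b k (modIdx k s) - 1) * ∏ j ∈ Icc 1 s, bShift' s b k j) *
        hgCoeff' r s sig a b (k + s) n := by
  have hj₀ := modIdx_mem k hs
  rw [hgCoeff'_add_self hs, hgCoeff'_eq_hgTerm, hgCoeff'_eq_hgTerm]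
  exact hgTerm_succ_sub_of_lower_num_den hℓ hAℓ hA hj₀ (bShift'_modIdx_sub_one hs b k)
    (fun j hj ↦ bShift'_sub_one_of_ne_modIdx hs b hj)
    (bShift'_add_natCast_ne_zero hb (by omega) hj₀ n) (bShift'_modIdx_sub_one_ne_zero hs hb k)

end Coefficients

theorem stmt9_general {K : Type*} [Field K] [CharZero K]
    (r s : ℕ) (hs : 1 ≤ s)
    (sig : ℕ → ℕ)
    (hsig1 : ∀ i, 1 ≤ i → i ≤ r → 1 ≤ sig i ∧ sig i ≤ s)
    (hsig2 : ∀ i i', 1 ≤ i → i < i' → i' ≤ r → sig i < sig i')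
    (hsig3 : sig (r + 1) = s + 1)
    (a b : ℕ → K)
    (hb : ∀ j, 1 ≤ j → j ≤ s → ∀ q : ℤ, -1 ≤ q → b j + (q : K) ≠ 0)
    (α : ℕ → K)
    (hα1 : ∀ k : ℕ, (∀ ℓ, 1 ≤ ℓ → ℓ ≤ r + 1 → modIdx k (s + 1) ≠ sig ℓ) →
      α (k + s) =
        -(∏ i ∈ Finset.Icc 1 (r + 1), aShift' s sig a (k : ℤ) i) /
          ((bShift' s b (k : ℤ) (modIdx k s) - 1) *
            ∏ j ∈ Finset.Icc 1 s, bShift' s b (k : ℤ) j))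
    (hα2 : ∀ k ℓ, 1 ≤ ℓ → ℓ ≤ r + 1 → modIdx k (s + 1) = sig ℓ →
      α (k + s) =
        ((bShift' s b (k : ℤ) (modIdx k s) - aShift' s sig a (k : ℤ) ℓ) *
            ∏ i ∈ (Finset.Icc 1 (r + 1)).erase ℓ, aShift' s sig a (k : ℤ) i) /
          ((bShift' s b (k : ℤ) (modIdx k s) - 1) *
            ∏ j ∈ Finset.Icc 1 s, bShift' s b (k : ℤ) j)) :
    ∀ k : ℕ,
      PowerSeries.mk (hgCoeff' r s sig a b (k : ℤ))
          - PowerSeries.mk (hgCoeff' r s sig a b ((k : ℤ) - 1))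
        = PowerSeries.C (R := K) (α (k + s)) * PowerSeries.X *
            PowerSeries.mk (hgCoeff' r s sig a b ((k : ℤ) + s)) := by
  intro k
  ext n
  rw [map_sub, PowerSeries.coeff_mk, PowerSeries.coeff_mk, mul_assoc, PowerSeries.coeff_C_mul]
  rcases n with _ | n
  · simp [hgCoeff']
  rw [PowerSeries.coeff_succ_X_mul, PowerSeries.coeff_mk]
  have hA : ∀ i ∈ Icc 1 (r + 1), aShift' s sig a (k - 1) i =
      aShift' s sig a k i - if modIdx k (s + 1) = sig i then 1 else 0 := fun i hi ↦ by
    simp only [aShift'_sub_one, modIdx_eq_iff (sig_mem_Icc_succ hsig1 hsig3 hi)]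
  by_cases h : ∃ ℓ ∈ Icc 1 (r + 1), modIdx k (s + 1) = sig ℓ
  · obtain ⟨ℓ, hℓ, hkℓ⟩ := h
    rw [hα2 k ℓ (mem_Icc.mp hℓ).1 (mem_Icc.mp hℓ).2 hkℓ]
    refine hgCoeff'_succ_sub_of_aShift'_lower hs hb k n hℓ (by rw [hA ℓ hℓ, if_pos hkℓ])
      fun i hi ↦ ?_
    obtain ⟨hiℓ, hi⟩ := mem_erase.mp hi
    have hinj := (strictMonoOn_sig_Icc_succ hsig1 hsig2 hsig3).injOn
    rw [hA i hi, if_neg fun h ↦ hiℓ (hinj hi hℓ (h.symm.trans hkℓ)), sub_zero]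
  · push Not at h
    rw [hα1 k fun ℓ h1 h2 ↦ h ℓ (mem_Icc.mpr ⟨h1, h2⟩)]
    exact hgCoeff'_succ_sub_of_aShift'_eq hs hb k n fun i hi ↦ by
      rw [hA i hi, if_neg (h i hi), sub_zero]

/-- The Euler–Gauss recurrence `g_k − g_{k−1} = α_{k+s}·t·g_{k+s}` for the contiguous
hypergeometric series `g_k` (case `r ≤ s`). -/
theorem stmt9 {K : Type*} [Field K] [CharZero K]
    (r s : ℕ) (hs : 1 ≤ s) (hr : r ≤ s)
    (sig : ℕ → ℕ)
    (hsig1 : ∀ i, 1 ≤ i → i ≤ r → 1 ≤ sig i ∧ sig i ≤ s)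
    (hsig2 : ∀ i i', 1 ≤ i → i < i' → i' ≤ r → sig i < sig i')
    (hsig3 : sig (r + 1) = s + 1)
    (a b : ℕ → K)
    (hb : ∀ j, 1 ≤ j → j ≤ s → ∀ q : ℤ, -1 ≤ q → b j + (q : K) ≠ 0)
    (α : ℕ → K)
    (hα1 : ∀ k : ℕ, (∀ ℓ, 1 ≤ ℓ → ℓ ≤ r + 1 → modIdx k (s + 1) ≠ sig ℓ) →
      α (k + s) =
        -(∏ i ∈ Finset.Icc 1 (r + 1), aShift' s sig a (k : ℤ) i) /
          ((bShift' s b (k : ℤ) (modIdx k s) - 1) *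
            ∏ j ∈ Finset.Icc 1 s, bShift' s b (k : ℤ) j))
    (hα2 : ∀ k ℓ, 1 ≤ ℓ → ℓ ≤ r + 1 → modIdx k (s + 1) = sig ℓ →
      α (k + s) =
        ((bShift' s b (k : ℤ) (modIdx k s) - aShift' s sig a (k : ℤ) ℓ) *
            ∏ i ∈ (Finset.Icc 1 (r + 1)).erase ℓ, aShift' s sig a (k : ℤ) i) /
          ((bShift' s b (k : ℤ) (modIdx k s) - 1) *
            ∏ j ∈ Finset.Icc 1 s, bShift' s b (k : ℤ) j)) :
    ∀ k : ℕ,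
      PowerSeries.mk (hgCoeff' r s sig a b (k : ℤ))
          - PowerSeries.mk (hgCoeff' r s sig a b ((k : ℤ) - 1))
        = PowerSeries.C (R := K) (α (k + s)) * PowerSeries.X *
            PowerSeries.mk (hgCoeff' r s sig a b ((k : ℤ) + s)) :=
  stmt9_general r s hs sig hsig1 hsig2 hsig3 a b hb α hα1 hα2
end

section
/- Let r, s ∈ ℕ with m := max(r,s) ≥ 1, indices 1 ≤ λ_1 < ⋯ < λ_s ≤ r when r ≥ s (λ_j := j when r ≤ s), K a field of characteristic zero, and a_1,…,a_r, b_1,…,b_s ∈ K with b_j + q ≠ 0 for every integer q ≥ 0 and every j. Let P_n(x) = Σ_{k=0}^{n} (−1)^k C(n,k) [ ∏_{i=1}^{r} (a_i + n − k)_k / ∏_{j=1}^{s} (b_j^{(n−1)} + n − k)_k ] x^{n−k} with b_j^{(n−1)} = b_j + ⌈(n−λ_j)/m⌉. For c ∈ K let T_c be the operator on K[x] given by T_c(q)(x) = x·q′(x) + c·q(x). Then P_n satisfies the (m+1)-order differential equation (T_{a_1} ∘ T_{a_2} ∘ ⋯ ∘ T_{a_r})(P_n′)(x) = (T_{b_1^{(n−1)}}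 ∘ ⋯ ∘ T_{b_s^{(n−1)}})( x·P_n′(x) − n·P_n(x) ) as an identity of polynomials in K[x]. -/
/-!
The operator `T_c` is diagonal on monomials, `T_c(x^d) = (d + c) x^d`, and `x·q′ − n·q = T_{−n}(q)`.
Writing `P_n = Σ_k c_k x^{n−k}`, both sides of the equation are therefore sums of monomials, and
comparing the coefficients of `x^{n−k−1}` reduces the equation to the two-term recurrence
`c_k (n−k) ∏_i (a_i + n−k−1) = −(k+1) c_{k+1} ∏_j (β_j + n−k−1)`, which follows from
`(x)_{k+1} = x (x+1)_k` and `(k+1) C(n,k+1) = (n−k) C(n,k)`. The only division to undo is by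
`∏_j (β_j + n−k−1)` with `β_j = b_j + ⌈(n−λ_j)/m⌉`; since `λ_j ≤ m` the ceiling is nonnegative
as soon as `n ≥ 1`, so these factors are of the form `b_j + q` with `q ∈ ℕ` and do not vanish.
-/

open Finset Polynomial

/-- The type II multiple orthogonal polynomials on the step-line:
`P_n(x) = Σ_{k=0}^{n} (−1)^k C(n,k) [∏_i (a_i+n−k)_k / ∏_j (b_j^{(n−1)}+n−k)_k] x^{n−k}`
with `b_j^{(n−1)} = b_j + ⌈(n−λ_j)/m⌉`. -/
noncomputable def polyP {K : Type*} [Field K] (r s m : ℕ) (lam : ℕ → ℕ) (a b : ℕ → K)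
    (n : ℕ) : Polynomial K :=
  ∑ k ∈ Finset.range (n + 1),
    Polynomial.C ((-1) ^ k * (n.choose k : K) *
        (∏ i ∈ Finset.Icc 1 r,
          (ascPochhammer K k).eval (a i + ((n - k : ℕ) : K))) /
        ∏ j ∈ Finset.Icc 1 s,
          (ascPochhammer K k).eval
            (b j + ((⌈(((n : ℤ) - (lam j : ℤ) : ℤ) : ℚ) / (m : ℚ)⌉ : ℤ) : K) +
              ((n - k : ℕ) : K))) *
      Polynomial.X ^ (n - k)

/-- The operator `T_c = x·(d/dx) + c` on `K[x]`. -/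
noncomputable def thetaOp {K : Type*} [Field K] (c : K) (q : Polynomial K) : Polynomial K :=
  Polynomial.X * Polynomial.derivative q + Polynomial.C c * q

section thetaOp

variable {K : Type*} [Field K]

lemma thetaOp_C_mul_X_pow (c e : K) (d : ℕ) :
    thetaOp c (C e * X ^ d) = C (e * (d + c)) * X ^ d := by
  rw [thetaOp, derivative_C_mul_X_pow]
  cases d with
  | zero => simp [mul_comm]
  | succ d =>
    simp only [C_mul, C_add, pow_succ, Nat.add_sub_cancel, Nat.cast_succ]
    ring

lemma thetaOp_sum {ι : Type*} (c : K) (f : ι → K[X]) (t : Finset ι) :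
    thetaOp c (∑ k ∈ t, f k) = ∑ k ∈ t, thetaOp c (f k) := by
  simp only [thetaOp, derivative_sum, mul_sum, sum_add_distrib]

lemma X_mul_derivative_sub_C_mul (n : K) (q : K[X]) :
    X * derivative q - C n * q = thetaOp (-n) q := by
  rw [thetaOp, C_neg, neg_mul, sub_eq_add_neg]

lemma foldr_thetaOp_sum_C_mul_X_pow {ι : Type*} (g : ℕ → K) (L : List ℕ) (t : Finset ι)
    (e : ι → K) (d : ι → ℕ) :
    L.foldr (fun i q => thetaOp (g i) q) (∑ k ∈ t, C (e k) * X ^ d k) =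
      ∑ k ∈ t, C (e k * (L.map fun i => (d k : K) + g i).prod) * X ^ d k := by
  induction L with
  | nil => simp
  | cons i L ih =>
    simp only [List.foldr_cons, ih, thetaOp_sum, thetaOp_C_mul_X_pow, List.map_cons,
      List.prod_cons]
    exact sum_congr rfl fun k _ => by ring_nf

end thetaOp

lemma List.prod_map_range'_one {M : Type*} [CommMonoid M] (f : ℕ → M) (r : ℕ) :
    ((List.range' 1 r).map f).prod = ∏ i ∈ Icc 1 r, f i := by
  rw [← List.toFinset_range'_1_1, List.prod_toFinset _ List.nodup_range']

lemma Int.ceil_div_nonneg {α : Type*} [Field α] [LinearOrder α] [IsStrictOrderedRing α]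
    [FloorRing α] {z m : α} (hm : 0 ≤ m) (h : -m < z) : 0 ≤ ⌈z / m⌉ := by
  rcases hm.eq_or_lt with rfl | hm
  · simp
  · have : ((-1 : ℤ) : α) < z / m := by
      rw [lt_div_iff₀ hm]
      push_cast
      linarith
    have := Int.lt_ceil.mpr this
    omega

section hypergeometric

variable {K : Type*} [Field K] (r s : ℕ) (a β : ℕ → K)

noncomputable def hypergeomCoeff (n k : ℕ) : K :=
  (-1) ^ k * (n.choose k : K) *
      (∏ i ∈ Icc 1 r, (ascPochhammer K k).eval (a i + ((n - k : ℕ) : K))) /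
    ∏ j ∈ Icc 1 s, (ascPochhammer K k).eval (β j + ((n - k : ℕ) : K))

noncomputable def hypergeomPoly (n : ℕ) : K[X] :=
  ∑ k ∈ range (n + 1), C (hypergeomCoeff r s a β n k) * X ^ (n - k)

lemma polyP_eq_hypergeomPoly (m : ℕ) (lam : ℕ → ℕ) (b : ℕ → K) (n : ℕ) :
    polyP r s m lam a b n =
      hypergeomPoly r s a (fun j => b j + ((⌈(((n : ℤ) - lam j : ℤ) : ℚ) / m⌉ : ℤ) : K)) n :=
  rfl

variable {r s a β}

lemma hypergeomCoeff_succ_mul {n k : ℕ} (hk : k < n)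
    (hβ : ∀ j ∈ Icc 1 s, β j + ((n - (k + 1) : ℕ) : K) ≠ 0) :
    hypergeomCoeff r s a β n (k + 1) * (((n - (k + 1) : ℕ) : K) + -n) *
        ∏ j ∈ Icc 1 s, (((n - (k + 1) : ℕ) : K) + β j) =
      hypergeomCoeff r s a β n k * ((n - k : ℕ) : K) *
        ∏ i ∈ Icc 1 r, (((n - (k + 1) : ℕ) : K) + a i) := by
  obtain ⟨d, rfl⟩ := Nat.exists_eq_add_of_lt hk
  have hd : k + d + 1 - (k + 1) = d := by omega
  have hd' : k + d + 1 - k = d + 1 := by omega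
  have hchoose : ((k + d + 1).choose (k + 1) : K) * (k + 1) = ((k + d + 1).choose k) * (d + 1) := by
    simpa only [hd', Nat.cast_mul, Nat.cast_add_one] using
      congrArg (Nat.cast (R := K)) (Nat.choose_succ_right_eq (k + d + 1) k)
  have poch (x : K) : (ascPochhammer K (k + 1)).eval (x + d) =
      (d + x) * (ascPochhammer K k).eval (x + (d + 1 : ℕ)) := by
    rw [ascPochhammer_succ_left]
    simp only [eval_mul, eval_X, eval_comp, eval_add, eval_one, Nat.cast_succ]
    ring_nf
  simp only [hd] at hβ ⊢
  have hY : ∏ j ∈ Icc 1 s, ((d : K) + β j) ≠ 0 :=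
    prod_ne_zero_iff.mpr fun j hj => by rw [add_comm]; exact hβ j hj
  -- only the new denominator factor `∏ j (β_j + d)` has to be cancelled
  have hnext : hypergeomCoeff r s a β (k + d + 1) (k + 1) * ∏ j ∈ Icc 1 s, ((d : K) + β j) =
      (-1) ^ (k + 1) * ((k + d + 1).choose (k + 1) : K) *
        ((∏ i ∈ Icc 1 r, ((d : K) + a i)) *
          ∏ i ∈ Icc 1 r, (ascPochhammer K k).eval (a i + ((d + 1 : ℕ) : K))) /
        ∏ j ∈ Icc 1 s, (ascPochhammer K k).eval (β j + ((d + 1 : ℕ) : K)) := by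
    simp only [hypergeomCoeff, hd, poch, prod_mul_distrib]
    rw [mul_comm (∏ j ∈ Icc 1 s, ((d : K) + β j)), ← div_div, div_mul_cancel₀ _ hY]
  rw [mul_right_comm, hnext, hypergeomCoeff, hd']
  simp only [div_eq_mul_inv]
  push_cast
  linear_combination (-1) ^ k * (∏ i ∈ Icc 1 r, ((d : K) + a i)) *
    (∏ i ∈ Icc 1 r, (ascPochhammer K k).eval (a i + ((d : K) + 1))) *
    (∏ j ∈ Icc 1 s, (ascPochhammer K k).eval (β j + ((d : K) + 1)))⁻¹ * hchoose

theorem foldr_thetaOp_derivative_hypergeomPoly {n : ℕ}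
    (hβ : ∀ j ∈ Icc 1 s, ∀ q < n, β j + (q : K) ≠ 0) :
    (List.range' 1 r).foldr (fun i q => thetaOp (a i) q)
        (derivative (hypergeomPoly r s a β n)) =
      (List.range' 1 s).foldr (fun j q => thetaOp (β j) q)
        (X * derivative (hypergeomPoly r s a β n) - C (n : K) * hypergeomPoly r s a β n) := by
  set c := hypergeomCoeff r s a β n
  have hder : derivative (hypergeomPoly r s a β n) =
      ∑ k ∈ range (n + 1), C (c k * ((n - k : ℕ) : K)) * X ^ (n - k - 1) := by
    simp only [hypergeomPoly, derivative_sum, derivative_C_mul_X_pow, c]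
  have heuler : X * derivative (hypergeomPoly r s a β n) - C (n : K) * hypergeomPoly r s a β n =
      ∑ k ∈ range (n + 1), C (c k * (((n - k : ℕ) : K) + -n)) * X ^ (n - k) := by
    simp only [X_mul_derivative_sub_C_mul, hypergeomPoly, thetaOp_sum, thetaOp_C_mul_X_pow, c]
  rw [heuler, hder, foldr_thetaOp_sum_C_mul_X_pow, foldr_thetaOp_sum_C_mul_X_pow,
    sum_range_succ, sum_range_succ']
  simp only [Nat.sub_self, Nat.sub_zero, Nat.cast_zero, mul_zero, zero_mul, C_0, add_neg_cancel,
    add_zero, List.prod_map_range'_one, Nat.sub_sub]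
  refine sum_congr rfl fun k hk => ?_
  have hk : k < n := mem_range.mp hk
  rw [hypergeomCoeff_succ_mul hk fun j hj => hβ j hj _ (by omega)]

end hypergeometric

lemma lam_le_max {r s : ℕ} {lam : ℕ → ℕ}
    (hcase :
      (s ≤ r ∧
        (∀ j, 1 ≤ j → j ≤ s → 1 ≤ lam j ∧ lam j ≤ r) ∧
        (∀ j j', 1 ≤ j → j < j' → j' ≤ s → lam j < lam j')) ∨
      (r ≤ s ∧ (∀ j, 1 ≤ j → j ≤ s → lam j = j)))
    {j : ℕ} (hj : j ∈ Icc 1 s) : lam j ≤ max r s := by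
  obtain ⟨hj1, hjs⟩ := mem_Icc.mp hj
  rcases hcase with ⟨-, hlam, -⟩ | ⟨-, hlam⟩
  · exact (hlam j hj1 hjs).2.trans (le_max_left r s)
  · exact (hlam j hj1 hjs).symm ▸ hjs.trans (le_max_right r s)

theorem stmt14_general {K : Type*} [Field K]
    (r s : ℕ)
    (lam : ℕ → ℕ)
    (hcase :
      (s ≤ r ∧
        (∀ j, 1 ≤ j → j ≤ s → 1 ≤ lam j ∧ lam j ≤ r) ∧
        (∀ j j', 1 ≤ j → j < j' → j' ≤ s → lam j < lam j')) ∨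
      (r ≤ s ∧ (∀ j, 1 ≤ j → j ≤ s → lam j = j)))
    (a b : ℕ → K)
    (hb : ∀ j, 1 ≤ j → j ≤ s → ∀ q : ℕ, b j + (q : K) ≠ 0)
    (n : ℕ) :
    List.foldr (fun i q => thetaOp (a i) q)
        (Polynomial.derivative (polyP r s (max r s) lam a b n))
        (List.range' 1 r)
      = List.foldr
          (fun j q =>
            thetaOp (b j + ((⌈(((n : ℤ) - (lam j : ℤ) : ℤ) : ℚ) / (max r s : ℚ)⌉ : ℤ) : K)) q)
          (Polynomial.X * Polynomial.derivative (polyP r s (max r s) lam a b n) -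
            Polynomial.C (n : K) * polyP r s (max r s) lam a b n)
          (List.range' 1 s) := by
  rw [polyP_eq_hypergeomPoly]
  push_cast
  refine foldr_thetaOp_derivative_hypergeomPoly fun j hj q hq => ?_
  obtain ⟨hj1, hjs⟩ := mem_Icc.mp hj
  have hceil : 0 ≤ ⌈((n : ℚ) - lam j) / max (r : ℚ) s⌉ := by
    refine Int.ceil_div_nonneg (by positivity) ?_
    have hlam : (lam j : ℚ) ≤ max (r : ℚ) s := by exact_mod_cast lam_le_max hcase hj
    have hn : (1 : ℚ) ≤ n := by exact_mod_cast Nat.one_le_of_lt hq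
    linarith
  lift ⌈((n : ℚ) - lam j) / max (r : ℚ) s⌉ to ℕ using hceil with t
  simpa [add_assoc] using hb j hj1 hjs (t + q)

/-- The `(m+1)`-order differential equation
`(T_{a_1}∘⋯∘T_{a_r})(P_n′) = (T_{b_1^{(n−1)}}∘⋯∘T_{b_s^{(n−1)}})(x·P_n′ − n·P_n)`
satisfied by the hypergeometric multiple orthogonal polynomials `P_n`. -/
theorem stmt14 {K : Type*} [Field K] [CharZero K]
    (r s : ℕ) (hm : 1 ≤ max r s)
    (lam : ℕ → ℕ)
    (hcase :
      (s ≤ r ∧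
        (∀ j, 1 ≤ j → j ≤ s → 1 ≤ lam j ∧ lam j ≤ r) ∧
        (∀ j j', 1 ≤ j → j < j' → j' ≤ s → lam j < lam j')) ∨
      (r ≤ s ∧ (∀ j, 1 ≤ j → j ≤ s → lam j = j)))
    (a b : ℕ → K)
    (hb : ∀ j, 1 ≤ j → j ≤ s → ∀ q : ℕ, b j + (q : K) ≠ 0)
    (n : ℕ) :
    List.foldr (fun i q => thetaOp (a i) q)
        (Polynomial.derivative (polyP r s (max r s) lam a b n))
        (List.range' 1 r)
      = List.foldr
          (fun j q =>
            thetaOp (b j + ((⌈(((n : ℤ) - (lam j : ℤ) : ℤ) : ℚ) / (max r s : ℚ)⌉ : ℤ) : K)) q)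
          (Polynomial.X * Polynomial.derivative (polyP r s (max r s) lam a b n) -
            Polynomial.C (n : K) * polyP r s (max r s) lam a b n)
          (List.range' 1 s) :=
  stmt14_general r s lam hcase a b hb n
end

section
/- Let r, s ∈ ℕ with m := max(r,s) ≥ 1, let K be a field of characteristic zero, and for parameters a_1,…,a_r, b_1,…,b_s ∈ K (with b_j + q ≠ 0 for every integer q ≥ 0) and indices 1 ≤ λ_1 < ⋯ < λ_s ≤ r (when r ≥ s; λ_j := j when r ≤ s) write P_n^{(λ_1,…,λ_s)}(x | a_1,…,a_r; b_1,…,b_s) = Σ_{k=0}^{n} (−1)^k C(n,k) [ ∏_{i=1}^{r} (a_i+n−k)_k / ∏_{j=1}^{s} (b_j + ⌈(n−λ_j)/m⌉ + n−k)_k ] x^{n−k}. Then for every n ≥ 1: (i) if r ≥ s and λ_1 = 1, (d/dx) P_n^{(λ_1,…,λ_s)}(x | a_1,…,a_r; b_1,…,b_s) = n · P_{n−1}^{(λ_2−1,…,λ_s−1,r)}(x | a_1+1,…,a_r+1; b_2+1,…,b_s+1, b_1+2); (ii) if r ≥ s and λ_1 ≥ 2, (d/dx) P_n^{(λ_1,…,λ_s)}(x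 | a_1,…,a_r; b_1,…,b_s) = n · P_{n−1}^{(λ_1−1,…,λ_s−1)}(x | a_1+1,…,a_r+1; b_1+1,…,b_s+1); (iii) if r ≤ s (so λ_j = j), (d/dx) P_n(x | a_1,…,a_r; b_1,…,b_s) = n · P_{n−1}(x | a_1+1,…,a_r+1; b_2+1,…,b_s+1, b_1+2). -/
open Finset Polynomial

/-!
Differentiating `P_{n+1}` term by term multiplies the `k`-th coefficient by `n + 1 - k`, and
`(n + 1 - k) C(n + 1, k) = (n + 1) C(n, k)`. Raising every `a_i` by one while lowering `n` by one
leaves the upper Pochhammer products unchanged. The lower products only depend on the multiset of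
effective lower parameters `b_j + ⌈(n - λ_j)/m⌉`, so it suffices that the new multiset is the old
one shifted by one. If every `λ_j ≥ 1` this holds termwise with `λ_j ↦ λ_j - 1`, `b_j ↦ b_j + 1`.
If `λ_1 = 1`, the first parameter may instead be moved to the end with `λ = m`: there
`⌈(n - m)/m⌉ = ⌈n/m⌉ - 1` is compensated by `b_1 ↦ b_1 + 2`.
-/

theorem Polynomial.derivative_sum_range_C_mul_X_pow_sub {R : Type*} [CommSemiring R]
    (n : ℕ) (c : ℕ → R) :
    derivative (∑ k ∈ range (n + 2), C (c k) * X ^ (n + 1 - k))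
      = ∑ k ∈ range (n + 1), C (((n + 1 - k : ℕ) : R) * c k) * X ^ (n - k) := by
  rw [sum_range_succ _ (n + 1), Nat.sub_self, pow_zero, mul_one, derivative_add, derivative_C,
    add_zero, derivative_sum]
  refine sum_congr rfl fun k _ => ?_
  rw [derivative_C_mul_X_pow, mul_comm (c k), show n + 1 - k - 1 = n - k by grind]

theorem Multiset.map_Icc_one_rotate {α : Type*} (s : ℕ) (f g : ℕ → α)
    (hlast : 1 ≤ s → g s = f 1) (hmid : ∀ j, 1 ≤ j → j < s → g j = f (j + 1)) :
    (Finset.Icc 1 s).val.map g = (Finset.Icc 1 s).val.map f := by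
  have hsum (h : ℕ → α) : (Finset.Icc 1 s).val.map h = ∑ j ∈ Finset.Icc 1 s, {h j} := by
    rw [sum_eq_multiset_sum, ← Multiset.sum_map_singleton (Multiset.map h _), Multiset.map_map]
    rfl
  rw [hsum, hsum]
  refine sum_nbij' (fun j => if j = s then 1 else j + 1) (fun j => if j = 1 then s else j - 1)
    ?_ ?_ ?_ ?_ fun j hj => ?_
  iterate 4 intro j hj; simp only [Finset.mem_Icc] at hj ⊢; split_ifs <;> omega
  rw [Finset.mem_Icc] at hj
  split_ifs with h
  · rw [h, hlast (h ▸ hj.1)]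
  · rw [hmid j hj.1 (by omega)]

section

variable {K : Type*} [Field K]

noncomputable def pochProd (r k : ℕ) (c : ℕ → K) (t : K) : K :=
  ∏ i ∈ Icc 1 r, (ascPochhammer K k).eval (c i + t)

noncomputable def lowerParam (m : ℕ) (lam : ℕ → ℕ) (b : ℕ → K) (n j : ℕ) : K :=
  b j + ((⌈(((n : ℤ) - (lam j : ℤ) : ℤ) : ℚ) / (m : ℚ)⌉ : ℤ) : K)

theorem pochProd_eq_map (r k : ℕ) (c : ℕ → K) (t : K) :
    pochProd r k c t =
      (((Icc 1 r).val.map c).map fun x => (ascPochhammer K k).eval (x + t)).prod := by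
  rw [pochProd, prod_eq_multiset_prod, Multiset.map_map]
  rfl

theorem pochProd_add_one (r k : ℕ) (c : ℕ → K) (t : K) :
    pochProd r k (fun i => c i + 1) t = pochProd r k c (t + 1) := by
  simp only [pochProd, add_assoc, add_comm (1 : K)]

theorem polyP_eq (r s m : ℕ) (lam : ℕ → ℕ) (a b : ℕ → K) (n : ℕ) :
    polyP r s m lam a b n = ∑ k ∈ range (n + 1),
      C ((-1) ^ k * (n.choose k : K) * pochProd r k a ((n - k : ℕ) : K) /
        pochProd s k (lowerParam m lam b n) ((n - k : ℕ) : K)) * X ^ (n - k) :=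
  rfl

theorem derivative_polyP_zero (r s m : ℕ) (lam : ℕ → ℕ) (a b : ℕ → K) :
    derivative (polyP r s m lam a b 0) = 0 := by
  simp [polyP_eq]

theorem derivative_polyP_succ {r s m : ℕ} {lam lam' : ℕ → ℕ} {a b b' : ℕ → K} {n : ℕ}
    (hlower : (Icc 1 s).val.map (lowerParam m lam' b' n) =
      (Icc 1 s).val.map fun j => lowerParam m lam b (n + 1) j + 1) :
    derivative (polyP r s m lam a b (n + 1))
      = C ((n + 1 : ℕ) : K) * polyP r s m lam' (fun i => a i + 1) b' n := by
  rw [polyP_eq, polyP_eq, derivative_sum_range_C_mul_X_pow_sub, mul_sum]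
  refine sum_congr rfl fun k hk => ?_
  have hcast : ((n + 1 - k : ℕ) : K) = ((n - k : ℕ) : K) + 1 := by
    rw [Nat.sub_add_comm (by grind), Nat.cast_succ]
  have hchoose : (n + 1 - k) * (n + 1).choose k = (n + 1) * n.choose k := by
    rw [mul_comm, ← Nat.choose_mul_succ_eq, mul_comm]
  rw [pochProd_add_one r, pochProd_eq_map s k (lowerParam m lam' b' n), hlower, ← pochProd_eq_map,
    pochProd_add_one, ← hcast, ← mul_assoc, ← C_mul]
  congr 2
  have hchooseK := congrArg (Nat.cast : ℕ → K) hchoose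
  rw [Nat.cast_mul, Nat.cast_mul] at hchooseK
  linear_combination ((-1) ^ k * pochProd r k a ((n + 1 - k : ℕ) : K) /
    pochProd s k (lowerParam m lam b (n + 1)) ((n + 1 - k : ℕ) : K)) * hchooseK

theorem lowerParam_eq_succ_add_one {m : ℕ} {lam lam' : ℕ → ℕ} {b b' : ℕ → K} {n j j' : ℕ}
    (hlam : (lam' j : ℤ) = lam j' - 1) (hb : b' j = b j' + 1) :
    lowerParam m lam' b' n j = lowerParam m lam b (n + 1) j' + 1 := by
  rw [lowerParam, lowerParam, hb, show (n : ℤ) - lam' j = ((n + 1 : ℕ) : ℤ) - lam j' by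
    push_cast; omega]
  ring

theorem lowerParam_eq_succ_add_one_of_wrap {m : ℕ} {lam lam' : ℕ → ℕ} {b b' : ℕ → K}
    {n j j' : ℕ} (hm : m ≠ 0) (hlam : (lam' j : ℤ) = lam j' - 1 + m) (hb : b' j = b j' + 2) :
    lowerParam m lam' b' n j = lowerParam m lam b (n + 1) j' + 1 := by
  have hceil : ⌈(((n : ℤ) - lam' j : ℤ) : ℚ) / m⌉
      = ⌈((((n + 1 : ℕ) : ℤ) - lam j' : ℤ) : ℚ) / m⌉ - 1 := by
    rw [show (n : ℤ) - lam' j = ((n + 1 : ℕ) : ℤ) - lam j' - m by push_cast; omega,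
      Int.cast_sub, sub_div, Int.cast_natCast, div_self (Nat.cast_ne_zero.mpr hm), Int.ceil_sub_one]
  rw [lowerParam, lowerParam, hb, hceil]
  push_cast
  ring

theorem derivative_polyP_succ_of_one_le_lam {r s m : ℕ} {lam : ℕ → ℕ} {a b : ℕ → K} {n : ℕ}
    (hlam : ∀ j, 1 ≤ j → j ≤ s → 1 ≤ lam j) :
    derivative (polyP r s m lam a b (n + 1))
      = C ((n + 1 : ℕ) : K) * polyP r s m (fun j => lam j - 1) (fun i => a i + 1)
          (fun j => b j + 1) n := by
  refine derivative_polyP_succ (Multiset.map_congr rfl fun j hj => ?_)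
  rw [Finset.mem_val, Finset.mem_Icc] at hj
  have := hlam j hj.1 hj.2
  exact lowerParam_eq_succ_add_one (by omega) rfl

theorem derivative_polyP_succ_rotate {r s m : ℕ} {lam lam' : ℕ → ℕ} {a b : ℕ → K} {n : ℕ}
    (hsm : s ≤ m) (hfirst : 1 ≤ s → lam 1 = 1) (hlast : 1 ≤ s → lam' s = m)
    (hmid : ∀ j, 1 ≤ j → j < s → (lam' j : ℤ) = lam (j + 1) - 1) :
    derivative (polyP r s m lam a b (n + 1))
      = C ((n + 1 : ℕ) : K) * polyP r s m lam' (fun i => a i + 1)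
          (fun j => if j = s then b 1 + 2 else b (j + 1) + 1) n := by
  refine derivative_polyP_succ (Multiset.map_Icc_one_rotate s _ _ (fun hs => ?_) fun j hj hjs => ?_)
  · exact lowerParam_eq_succ_add_one_of_wrap (by omega) (by simp [hfirst hs, hlast hs]) (if_pos rfl)
  · exact lowerParam_eq_succ_add_one (hmid j hj hjs) (if_neg hjs.ne)

end

theorem stmt15_general {K : Type*} [Field K]
    (r s : ℕ)
    (lam : ℕ → ℕ) (a b : ℕ → K)
    (n : ℕ) :
    (s ≤ r →
      (∀ j, 1 ≤ j → j ≤ s → 1 ≤ lam j ∧ lam j ≤ r) →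
      (∀ j j', 1 ≤ j → j < j' → j' ≤ s → lam j < lam j') →
      lam 1 = 1 →
      Polynomial.derivative (polyP r s (max r s) lam a b n)
        = Polynomial.C (n : K) *
            polyP r s (max r s)
              (fun j => if j = s then r else lam (j + 1) - 1)
              (fun i => a i + 1)
              (fun j => if j = s then b 1 + 2 else b (j + 1) + 1) (n - 1)) ∧
    (s ≤ r →
      (∀ j, 1 ≤ j → j ≤ s → 1 ≤ lam j ∧ lam j ≤ r) →
      (∀ j j', 1 ≤ j → j < j' → j' ≤ s → lam j < lam j') →
      2 ≤ lam 1 →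
      Polynomial.derivative (polyP r s (max r s) lam a b n)
        = Polynomial.C (n : K) *
            polyP r s (max r s)
              (fun j => lam j - 1)
              (fun i => a i + 1)
              (fun j => b j + 1) (n - 1)) ∧
    (r ≤ s →
      (∀ j, 1 ≤ j → j ≤ s → lam j = j) →
      Polynomial.derivative (polyP r s (max r s) lam a b n)
        = Polynomial.C (n : K) *
            polyP r s (max r s) lam
              (fun i => a i + 1)
              (fun j => if j = s then b 1 + 2 else b (j + 1) + 1) (n - 1)) := by
  rcases n with _ | n
  · simp [derivative_polyP_zero]
  refine ⟨fun hsr hlam _ hfirst => ?_, fun _ hlam _ _ => ?_, fun hrs hlam => ?_⟩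
  · refine derivative_polyP_succ_rotate (le_max_right r s) (fun _ => hfirst)
      (fun _ => by simp [hsr]) fun j hj hjs => ?_
    have := (hlam (j + 1) (by omega) (by omega)).1
    simp only [hjs.ne, if_false]
    omega
  · exact derivative_polyP_succ_of_one_le_lam fun j hj hjs => (hlam j hj hjs).1
  · refine derivative_polyP_succ_rotate (le_max_right r s) (fun hs => hlam 1 le_rfl hs)
      (fun hs => by simp [hlam s hs le_rfl, hrs]) fun j hj hjs => ?_
    rw [hlam j hj hjs.le, hlam (j + 1) (by omega) hjs]
    push_cast
    ring

/-- Differentiation acts on the hypergeometric multiple orthogonal polynomials as a shift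
of the parameters: the three cases `r ≥ s, λ_1 = 1`; `r ≥ s, λ_1 ≥ 2`; and `r ≤ s`. -/
theorem stmt15 {K : Type*} [Field K] [CharZero K]
    (r s : ℕ) (hm : 1 ≤ max r s)
    (lam : ℕ → ℕ) (a b : ℕ → K)
    (hb : ∀ j, 1 ≤ j → j ≤ s → ∀ q : ℕ, b j + (q : K) ≠ 0)
    (n : ℕ) (hn : 1 ≤ n) :
    (s ≤ r →
      (∀ j, 1 ≤ j → j ≤ s → 1 ≤ lam j ∧ lam j ≤ r) →
      (∀ j j', 1 ≤ j → j < j' → j' ≤ s → lam j < lam j') →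
      lam 1 = 1 →
      Polynomial.derivative (polyP r s (max r s) lam a b n)
        = Polynomial.C (n : K) *
            polyP r s (max r s)
              (fun j => if j = s then r else lam (j + 1) - 1)
              (fun i => a i + 1)
              (fun j => if j = s then b 1 + 2 else b (j + 1) + 1) (n - 1)) ∧
    (s ≤ r →
      (∀ j, 1 ≤ j → j ≤ s → 1 ≤ lam j ∧ lam j ≤ r) →
      (∀ j j', 1 ≤ j → j < j' → j' ≤ s → lam j < lam j') →
      2 ≤ lam 1 →
      Polynomial.derivative (polyP r s (max r s) lam a b n)
        = Polynomial.C (n : K) *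
            polyP r s (max r s)
              (fun j => lam j - 1)
              (fun i => a i + 1)
              (fun j => b j + 1) (n - 1)) ∧
    (r ≤ s →
      (∀ j, 1 ≤ j → j ≤ s → lam j = j) →
      Polynomial.derivative (polyP r s (max r s) lam a b n)
        = Polynomial.C (n : K) *
            polyP r s (max r s) lam
              (fun i => a i + 1)
              (fun j => if j = s then b 1 + 2 else b (j + 1) + 1) (n - 1)) :=
  stmt15_general r s lam a b n
end
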